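/- arXiv:1906.02962 — 7 statements merged into one kernel-verified Lean document; each statement's English description precedes it below -/
import Mathlib

section
/- If the truck travel times t^T are nonnegative and satisfy the triangle inequality t^T_{ij} ≤ t^T_{ih} + t^T_{hj} for all i, h, j ∈ V, then the optimal value of model PDS (over binary x, y and real α satisfying all its constraints) equals OPT, the minimum cost of a feasible PDSTSP solution. -/
open Finset

/-- The arcs of a directed cycle whose nodes are listed (in order) in `l`. -/
def cycleArcs {α : Type*} (l : List α) : List (α × α) := l.zip (l.rotate 1)

/-- A PDSTSP instance: nodes `V = Fin (n+1)` with depot `0` and customers `C = V \ {0}`,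
a finite set `U` of drones, a set `CU` of drone-eligible customers, nonnegative truck
travel times `tT` and nonnegative drone round-trip times `tU`. -/
structure PDSTSP (n : ℕ) (U : Type*) [Fintype U] where
  CU : Finset (Fin (n + 1))
  hCU : (0 : Fin (n + 1)) ∉ CU
  tT : Fin (n + 1) → Fin (n + 1) → ℝ
  tU : Fin (n + 1) → ℝ
  tT_nonneg : ∀ i j, 0 ≤ tT i j
  tU_nonneg : ∀ i, 0 ≤ tU i

variable {n : ℕ} {U : Type*} [Fintype U]

/-- Arcs of the truck cycle `(0, tour₁, …, tourₚ, 0)`; empty if the truck serves nobody. -/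
def tourArcs (tour : List (Fin (n + 1))) : List (Fin (n + 1) × Fin (n + 1)) :=
  if tour = [] then [] else cycleArcs ((0 : Fin (n + 1)) :: tour)

/-- A feasible PDSTSP solution: the drone-served customers are those with `assign i ≠ none`
(they form a subset `D ⊆ CU`, and `assign` gives the drone serving them), while the truck
cycle through the depot visits exactly the customers of `C \ D`, each exactly once. -/
structure PDSSol (P : PDSTSP n U) where
  assign : Fin (n + 1) → Option U
  tour : List (Fin (n + 1))
  assign_mem : ∀ i, assign i ≠ none → i ∈ P.CU
  tour_nodup : tour.Nodup
  tour_mem : ∀ v, v ∈ tour ↔ (v ≠ 0 ∧ assign v = none)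

variable {P : PDSTSP n U}

/-- Length of the truck cycle. -/
noncomputable def PDSSol.truckLen (sol : PDSSol P) : ℝ :=
  ((tourArcs sol.tour).map fun a => P.tT a.1 a.2).sum

/-- Total working time of drone `k`. -/
noncomputable def PDSSol.droneLoad [DecidableEq U] (sol : PDSSol P) (k : U) : ℝ :=
  ∑ i : Fin (n + 1), if sol.assign i = some k then P.tU i else 0

/-- Cost of a solution: maximum mission time among the truck and the drones. -/
noncomputable def PDSSol.cost [DecidableEq U] (sol : PDSSol P) : ℝ :=
  max sol.truckLen (⨆ k : U, sol.droneLoad k)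

/-- Optimal value of the PDSTSP instance. -/
noncomputable def OPT [DecidableEq U] (P : PDSTSP n U) : ℝ :=
  sInf {c : ℝ | ∃ sol : PDSSol P, sol.cost = c}

/-- Feasibility for model PDS: binary `x`, `y` (with `y` supported on drone-eligible
customers), the two linking constraints, the degree constraints, flow conservation,
and all connectivity constraints. -/
def PDSFeasible (P : PDSTSP n U) (x : Fin (n + 1) → Fin (n + 1) → ℝ)
    (y : Fin (n + 1) → U → ℝ) (α : ℝ) : Prop :=
  (∀ i j, x i j = 0 ∨ x i j = 1) ∧
  (∀ i k, y i k = 0 ∨ y i k = 1) ∧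
  (∀ i, i ∉ P.CU → ∀ k, y i k = 0) ∧
  (∑ i, ∑ j, P.tT i j * x i j) ≤ α ∧
  (∀ k : U, (∑ i ∈ P.CU, P.tU i * y i k) ≤ α) ∧
  (∀ j : Fin (n + 1), j ≠ 0 → (∑ i, x i j) + (∑ k, y j k) = 1) ∧
  (∀ j : Fin (n + 1), j ≠ 0 → (∑ i, x j i) + (∑ k, y j k) = 1) ∧
  (∀ i : Fin (n + 1), (∑ j, x j i) = (∑ j, x i j)) ∧
  (∀ S : Finset (Fin (n + 1)), (0 : Fin (n + 1)) ∈ S → S ≠ Finset.univ →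
    1 ≤ (∑ i ∈ S, ∑ j ∈ Sᶜ, x i j) + (∑ j ∈ Sᶜ, ∑ k, y j k))

/-- Optimal value of model PDS. -/
noncomputable def pdsOpt (P : PDSTSP n U) : ℝ :=
  sInf {α : ℝ | ∃ x y, PDSFeasible P x y α}

/-- Incidence vector of the truck cycle: `x i j = 1` iff `(i,j)` is an arc of the cycle. -/
noncomputable def incX (sol : PDSSol P) : Fin (n + 1) → Fin (n + 1) → ℝ :=
  fun i j => if (i, j) ∈ tourArcs sol.tour then 1 else 0

/-- Incidence vector of the drone assignment: `y i k = 1` iff `i ∈ D` and `a i = k`. -/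
noncomputable def incY [DecidableEq U] (sol : PDSSol P) : Fin (n + 1) → U → ℝ :=
  fun i k => if sol.assign i = some k then 1 else 0



namespace PDSAux

variable {α : Type*}

/-- consecutive pairs of a list -/
def zt (l : List α) : List (α × α) := l.zip l.tail

@[simp] lemma zt_nil : zt ([] : List α) = [] := rfl
@[simp] lemma zt_single (a : α) : zt [a] = [] := rfl

lemma zt_cons (a : α) (k : List α) (hk : k ≠ []) :
    zt (a :: k) = (a, k.head hk) :: zt k := by
  cases k with
  | nil => exact absurd rfl hk
  | cons b t => rfl

lemma zt_append (m k : List α) (hm : m ≠ []) (hk : k ≠ []) :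
    zt (m ++ k) = zt m ++ (m.getLast hm, k.head hk) :: zt k := by
  induction m with
  | nil => exact absurd rfl hm
  | cons a m' ih =>
    cases m' with
    | nil =>
      simp [zt_cons a k hk]
    | cons b t =>
      have hm' : (b :: t : List α) ≠ [] := by simp
      have h1 : zt (a :: (b :: t) ++ k) = (a, b) :: zt ((b :: t) ++ k) := by
        rw [List.cons_append, zt_cons _ _ (by simp)]
        congr 1
      rw [h1, ih hm', zt_cons a (b :: t) hm']
      simp [List.getLast_cons hm']

lemma mem_zt_fst {l : List α} {p : α × α} (h : p ∈ zt l) : p.1 ∈ l.dropLast := by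
  induction l with
  | nil => simp [zt] at h
  | cons a t ih =>
    cases t with
    | nil => simp [zt] at h
    | cons b t' =>
      rw [zt_cons a (b :: t') (by simp)] at h
      rcases List.mem_cons.1 h with h | h
      · subst h; simp
      · simp only [List.dropLast_cons₂, List.mem_cons]
        exact Or.inr (ih h)

lemma mem_zt_snd {l : List α} {p : α × α} (h : p ∈ zt l) : p.2 ∈ l.tail :=
  (List.of_mem_zip h).2

lemma map_fst_zt (l : List α) : (zt l).map Prod.fst = l.dropLast := by
  induction l with
  | nil => rfl
  | cons a t ih =>
    cases t with
    | nil => rfl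
    | cons b t' =>
      rw [zt_cons a (b :: t') (by simp)]
      simp only [List.map_cons, List.dropLast_cons₂]
      rw [ih]

lemma zt_nodup {l : List α} (h : l.dropLast.Nodup) : (zt l).Nodup := by
  have := map_fst_zt l ▸ h
  exact this.of_map _

lemma exists_pred {l : List α} {v : α} (h : v ∈ l.tail) : ∃ u, (u, v) ∈ zt l := by
  induction l with
  | nil => simp at h
  | cons a t ih =>
    cases t with
    | nil => simp at h
    | cons b t' =>
      rw [zt_cons a (b :: t') (by simp)]
      simp only [List.tail_cons] at h
      rcases List.mem_cons.1 h with h | h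
      · exact ⟨a, by simp [h]⟩
      · rcases ih (by simpa using h) with ⟨u, hu⟩
        exact ⟨u, List.mem_cons_of_mem _ hu⟩

lemma exists_succ {l : List α} {v : α} (h : v ∈ l.dropLast) : ∃ w, (v, w) ∈ zt l := by
  induction l with
  | nil => simp at h
  | cons a t ih =>
    cases t with
    | nil => simp at h
    | cons b t' =>
      rw [zt_cons a (b :: t') (by simp)]
      simp only [List.dropLast_cons₂, List.mem_cons] at h
      rcases h with h | h
      · exact ⟨b, by simp [h]⟩
      · rcases ih h with ⟨w, hw⟩
        exact ⟨w, List.mem_cons_of_mem _ hw⟩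

lemma zip_trunc : ∀ (l v ext : List α), v.length ≤ l.length → (l ++ ext).zip v = l.zip v := by
  intro l
  induction l with
  | nil =>
    intro v ext h
    simp only [List.length_nil, Nat.le_zero, List.length_eq_zero_iff] at h
    simp [h]
  | cons a l' ih =>
    intro v ext h
    cases v with
    | nil => simp
    | cons b v' =>
      simp only [List.cons_append, List.zip_cons_cons]
      rw [ih v' ext (by simpa using h)]

lemma path_cross {S : Finset α} [DecidableEq α] :
    ∀ (m : List α) (a : α), a ∈ S → ∀ b ∈ m, b ∉ S →
      ∃ p ∈ zt (a :: m), p.1 ∈ S ∧ p.2 ∉ S := by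
  intro m
  induction m with
  | nil => intro a _ b hb; simp at hb
  | cons c m' ih =>
    intro a ha b hb hbS
    by_cases hc : c ∈ S
    · have hb' : b ∈ m' := by
        rcases List.mem_cons.1 hb with h | h
        · exact absurd (h ▸ hc) hbS
        · exact h
      rcases ih c hc b hb' hbS with ⟨p, hp, h1, h2⟩
      refine ⟨p, ?_, h1, h2⟩
      rw [zt_cons a (c :: m') (by simp)]
      exact List.mem_cons_of_mem _ hp
    · refine ⟨(a, c), ?_, ha, hc⟩
      rw [zt_cons a (c :: m') (by simp)]
      simp

end PDSAux


namespace PDSAux2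

variable {α : Type*}

lemma zip_unique_fst : ∀ {l v : List α} {a b b' : α}, l.Nodup →
    (a, b) ∈ l.zip v → (a, b') ∈ l.zip v → b = b' := by
  intro l
  induction l with
  | nil => intro v a b b' _ h; simp at h
  | cons c l' ih =>
    intro v a b b' hnd h1 h2
    cases v with
    | nil => simp at h1
    | cons d v' =>
      simp only [List.zip_cons_cons, List.mem_cons, Prod.mk.injEq] at h1 h2
      rcases h1 with ⟨rfl, rfl⟩ | h1
      · rcases h2 with ⟨-, rfl⟩ | h2
        · rfl
        · exact absurd ((List.of_mem_zip h2).1) (by simpa using (List.nodup_cons.1 hnd).1 ·)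
      · rcases h2 with ⟨rfl, rfl⟩ | h2
        · exact absurd ((List.of_mem_zip h1).1) (by simpa using (List.nodup_cons.1 hnd).1 ·)
        · exact ih (List.nodup_cons.1 hnd).2 h1 h2

lemma zip_unique_snd : ∀ {l v : List α} {a a' b : α}, v.Nodup →
    (a, b) ∈ l.zip v → (a', b) ∈ l.zip v → a = a' := by
  intro l
  induction l with
  | nil => intro v a a' b _ h; simp at h
  | cons c l' ih =>
    intro v a a' b hnd h1 h2
    cases v with
    | nil => simp at h1
    | cons d v' =>
      simp only [List.zip_cons_cons, List.mem_cons, Prod.mk.injEq] at h1 h2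
      rcases h1 with ⟨rfl, rfl⟩ | h1
      · rcases h2 with ⟨rfl, -⟩ | h2
        · rfl
        · exact absurd ((List.of_mem_zip h2).2) (by simpa using (List.nodup_cons.1 hnd).1 ·)
      · rcases h2 with ⟨rfl, rfl⟩ | h2
        · exact absurd ((List.of_mem_zip h1).2) (by simpa using (List.nodup_cons.1 hnd).1 ·)
        · exact ih (List.nodup_cons.1 hnd).2 h1 h2

lemma zip_exists_of_fst : ∀ {l v : List α} {a : α}, l.length ≤ v.length → a ∈ l →
    ∃ b, (a, b) ∈ l.zip v := by
  intro l
  induction l with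
  | nil => intro v a _ h; simp at h
  | cons c l' ih =>
    intro v a hlen ha
    cases v with
    | nil => simp at hlen
    | cons d v' =>
      rcases List.mem_cons.1 ha with rfl | ha
      · exact ⟨d, by simp⟩
      · rcases ih (by simpa using hlen) ha with ⟨b, hb⟩
        exact ⟨b, List.mem_cons_of_mem _ hb⟩

lemma zip_exists_of_snd : ∀ {l v : List α} {b : α}, v.length ≤ l.length → b ∈ v →
    ∃ a, (a, b) ∈ l.zip v := by
  intro l
  induction l with
  | nil =>
    intro v b hlen hb
    simp only [List.length_nil, Nat.le_zero, List.length_eq_zero_iff] at hlen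
    subst hlen; simp at hb
  | cons c l' ih =>
    intro v b hlen hb
    cases v with
    | nil => simp at hb
    | cons d v' =>
      rcases List.mem_cons.1 hb with rfl | hb
      · exact ⟨c, by simp⟩
      · rcases ih (by simpa using hlen) hb with ⟨a, ha⟩
        exact ⟨a, List.mem_cons_of_mem _ ha⟩

lemma sum_indicator_unique {β : Type*} [Fintype β] (p : β → Prop) [DecidablePred p]
    (h : ∃! i, p i) : ∑ i : β, (if p i then (1 : ℝ) else 0) = 1 := by
  obtain ⟨a, ha, hu⟩ := h
  rw [Finset.sum_eq_single_of_mem a (Finset.mem_univ a)]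
  · simp [ha]
  · intro b _ hb
    exact if_neg (fun hp => hb (hu b hp))

lemma sum_indicator_zero {β : Type*} [Fintype β] (p : β → Prop) [DecidablePred p]
    (h : ∀ i, ¬ p i) : ∑ i : β, (if p i then (1 : ℝ) else 0) = 0 :=
  Finset.sum_eq_zero (fun i _ => if_neg (h i))

lemma exists_unique_of_binary_sum_one {β : Type*} [Fintype β] {f : β → ℝ}
    (hb : ∀ i, f i = 0 ∨ f i = 1) (h : ∑ i : β, f i = 1) : ∃! i, f i = 1 := by
  classical
  have hnn : ∀ i, 0 ≤ f i := fun i => by rcases hb i with h' | h' <;> simp [h']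
  have hex : ∃ i, f i = 1 := by
    by_contra hc
    push_neg at hc
    have : ∀ i, f i = 0 := fun i => (hb i).resolve_right (hc i)
    rw [Finset.sum_eq_zero (fun i _ => this i)] at h
    norm_num at h
  obtain ⟨a, ha⟩ := hex
  refine ⟨a, ha, fun b hbb => ?_⟩
  by_contra hne
  have hsub : ({b, a} : Finset β) ⊆ Finset.univ := Finset.subset_univ _
  have h2 : ∑ i ∈ ({b, a} : Finset β), f i = 2 := by
    rw [Finset.sum_pair hne, ha, hbb]; norm_num
  have := Finset.sum_le_sum_of_subset_of_nonneg hsub (fun i _ _ => hnn i)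
  rw [h2, h] at this
  norm_num at this

lemma binary_sum_zero {β : Type*} [Fintype β] {f : β → ℝ}
    (hb : ∀ i, f i = 0 ∨ f i = 1) (h : ∑ i : β, f i = 0) : ∀ i, f i = 0 := by
  have hnn : ∀ i ∈ Finset.univ, 0 ≤ f i := fun i _ => by rcases hb i with h' | h' <;> simp [h']
  intro i
  exact (Finset.sum_eq_zero_iff_of_nonneg hnn).1 h i (Finset.mem_univ i)

end PDSAux2

open PDSAux PDSAux2

section EasyDir

variable {n : ℕ} {U : Type*} [Fintype U] {P : PDSTSP n U}

lemma rotate_cons_one (a : Fin (n+1)) (l : List (Fin (n+1))) :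
    (a :: l).rotate 1 = l ++ [a] := by
  rw [List.rotate_cons_succ, List.rotate_zero]

lemma tourArcs_eq_zip {tour : List (Fin (n+1))} (h : tour ≠ []) :
    tourArcs tour = (0 :: tour).zip (tour ++ [(0 : Fin (n+1))]) := by
  rw [tourArcs, if_neg h, cycleArcs, rotate_cons_one]

lemma tourArcs_eq_zt {tour : List (Fin (n+1))} (h : tour ≠ []) :
    tourArcs tour = zt ((0 : Fin (n+1)) :: tour ++ [0]) := by
  rw [tourArcs_eq_zip h, zt]
  have : ((0 : Fin (n+1)) :: tour ++ [0]).tail = tour ++ [0] := rfl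
  rw [this]
  exact (zip_trunc (0 :: tour) (tour ++ [0]) [0] (by simp)).symm

lemma incFeasible [DecidableEq U] (sol : PDSSol P) :
    PDSFeasible P (incX sol) (incY sol) sol.cost := by
  classical
  set tour := sol.tour with htour
  have h0t : (0 : Fin (n+1)) ∉ tour := fun h => ((sol.tour_mem 0).1 h).1 rfl
  have hlnd : ((0 : Fin (n+1)) :: tour).Nodup := List.nodup_cons.2 ⟨h0t, sol.tour_nodup⟩
  have hvnd : (tour ++ [(0 : Fin (n+1))]).Nodup := by
    rw [List.nodup_append]
    exact ⟨sol.tour_nodup, List.nodup_singleton _, by intro a ha b hb hab; simp at hb; subst hb; subst hab; exact h0t ha⟩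
  have hlen : ((0 : Fin (n+1)) :: tour).length = (tour ++ [(0:Fin (n+1))]).length := by simp
  have hmemv : ∀ v : Fin (n+1), v ∈ tour ++ [(0:Fin (n+1))] ↔ v ∈ (0:Fin (n+1)) :: tour := by
    intro v; simp [or_comm]
  -- membership facts about arcs
  have harc_fst : ∀ {p : Fin (n+1) × Fin (n+1)}, p ∈ tourArcs tour → p.1 ∈ (0:Fin (n+1)) :: tour := by
    intro p hp
    rcases eq_or_ne tour [] with h | h
    · rw [tourArcs, if_pos h] at hp; simp at hp
    · rw [tourArcs_eq_zip h] at hp; exact (List.of_mem_zip hp).1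
  have harc_snd : ∀ {p : Fin (n+1) × Fin (n+1)}, p ∈ tourArcs tour → p.2 ∈ (0:Fin (n+1)) :: tour := by
    intro p hp
    rcases eq_or_ne tour [] with h | h
    · rw [tourArcs, if_pos h] at hp; simp at hp
    · rw [tourArcs_eq_zip h] at hp
      exact (hmemv _).1 (List.of_mem_zip hp).2
  have hxbin : ∀ i j, incX sol i j = 0 ∨ incX sol i j = 1 := by
    intro i j; unfold incX; split <;> simp
  have hybin : ∀ i k, incY sol i k = 0 ∨ incY sol i k = 1 := by
    intro i k; unfold incY; split <;> simp
  have hxnn : ∀ i j, 0 ≤ incX sol i j := fun i j => by rcases hxbin i j with h | h <;> simp [h]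
  have hynn : ∀ i k, 0 ≤ incY sol i k := fun i k => by rcases hybin i k with h | h <;> simp [h]
  -- y support
  have hysupp : ∀ i, i ∉ P.CU → ∀ k, incY sol i k = 0 := by
    intro i hi k
    unfold incY
    rw [if_neg]
    intro h
    exact hi (sol.assign_mem i (by rw [h]; simp))
  -- y row sums
  have hysum1 : ∀ j k0, sol.assign j = some k0 → (∑ k, incY sol j k) = 1 := by
    intro j k0 hj
    unfold incY
    refine sum_indicator_unique _ ⟨k0, hj, ?_⟩
    intro k hk
    rw [hj] at hk
    exact (Option.some_inj.1 hk).symm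
  have hysum0 : ∀ j, sol.assign j = none → (∑ k, incY sol j k) = 0 := by
    intro j hj
    unfold incY
    exact sum_indicator_zero _ (fun k h => by rw [hj] at h; cases h)
  -- truck sum
  have htrucksum : (∑ i, ∑ j, P.tT i j * incX sol i j) = sol.truckLen := by
    have harcnd : (tourArcs tour).Nodup := by
      rcases eq_or_ne tour [] with h | h
      · rw [tourArcs, if_pos h]; exact List.nodup_nil
      · rw [tourArcs_eq_zip h]
        have hmapfst : ((0 :: tour).zip (tour ++ [(0:Fin (n+1))])).map Prod.fst = 0 :: tour :=
          List.map_fst_zip (le_of_eq hlen)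
        exact (hmapfst ▸ hlnd).of_map _
    rw [← Finset.sum_product']
    rw [PDSSol.truckLen, ← htour]
    rw [← List.sum_toFinset _ harcnd]
    have : ∀ p : Fin (n+1) × Fin (n+1),
        P.tT p.1 p.2 * incX sol p.1 p.2 = if p ∈ (tourArcs tour).toFinset then P.tT p.1 p.2 else 0 := by
      intro p
      unfold incX
      simp only [Prod.mk.eta, List.mem_toFinset, mul_ite, mul_one, mul_zero]
      rfl
    calc ∑ p ∈ Finset.univ ×ˢ Finset.univ, P.tT p.1 p.2 * incX sol p.1 p.2
        = ∑ p ∈ Finset.univ ×ˢ Finset.univ, if p ∈ (tourArcs tour).toFinset then P.tT p.1 p.2 else 0 := by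
          exact Finset.sum_congr rfl (fun p _ => this p)
      _ = ∑ p ∈ (tourArcs tour).toFinset, P.tT p.1 p.2 := by
          rw [Finset.univ_product_univ, Finset.sum_ite_mem, Finset.univ_inter]
  refine ⟨hxbin, hybin, hysupp, ?_, ?_, ?_, ?_, ?_, ?_⟩
  · -- truck ≤ cost
    rw [htrucksum]
    exact le_max_left _ _
  · -- drones
    intro k
    have : (∑ i ∈ P.CU, P.tU i * incY sol i k) = sol.droneLoad k := by
      rw [PDSSol.droneLoad]
      rw [Finset.sum_subset (Finset.subset_univ P.CU)]
      · refine Finset.sum_congr rfl (fun i _ => ?_)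
        unfold incY
        split <;> simp_all
      · intro i _ hi
        have hnone : sol.assign i = none := by
          by_contra hc
          exact hi (sol.assign_mem i hc)
        unfold incY
        rw [hnone]
        simp
    rw [this]
    refine le_trans ?_ (le_max_right _ _)
    exact le_ciSup (Set.Finite.bddAbove (Set.finite_range _)) k
  · -- in-degree
    intro j hj
    rcases h : sol.assign j with _ | k0
    · -- truck customer
      have hjt : j ∈ tour := (sol.tour_mem j).2 ⟨hj, h⟩
      have hne : tour ≠ [] := List.ne_nil_of_mem hjt
      have hex : ∃! i, (i, j) ∈ tourArcs tour := by
        rw [tourArcs_eq_zip hne]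
        obtain ⟨a, ha⟩ := zip_exists_of_snd (le_of_eq hlen.symm) ((hmemv j).2 (by simp [hjt]))
        exact ⟨a, ha, fun a' ha' => zip_unique_snd hvnd ha' ha⟩
      have hx1 : (∑ i, incX sol i j) = 1 := by
        unfold incX
        exact sum_indicator_unique _ hex
      rw [hx1, hysum0 j h]; ring
    · -- drone customer
      have hjnt : j ∉ tour := fun hc => by
        have := ((sol.tour_mem j).1 hc).2
        rw [h] at this; cases this
      have hx0 : (∑ i, incX sol i j) = 0 := by
        unfold incX
        refine sum_indicator_zero _ (fun i hc => ?_)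
        have := harc_snd hc
        simp only [List.mem_cons] at this
        rcases this with h' | h'
        · exact hj h'
        · exact hjnt h'
      rw [hx0, hysum1 j k0 h]; ring
  · -- out-degree
    intro j hj
    rcases h : sol.assign j with _ | k0
    · have hjt : j ∈ tour := (sol.tour_mem j).2 ⟨hj, h⟩
      have hne : tour ≠ [] := List.ne_nil_of_mem hjt
      have hex : ∃! i, (j, i) ∈ tourArcs tour := by
        rw [tourArcs_eq_zip hne]
        obtain ⟨b, hb⟩ := zip_exists_of_fst (le_of_eq hlen) (List.mem_cons_of_mem _ hjt)
        exact ⟨b, hb, fun b' hb' => zip_unique_fst hlnd hb' hb⟩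
      have hx1 : (∑ i, incX sol j i) = 1 := by
        unfold incX
        exact sum_indicator_unique _ hex
      rw [hx1, hysum0 j h]; ring
    · have hjnt : j ∉ tour := fun hc => by
        have := ((sol.tour_mem j).1 hc).2
        rw [h] at this; cases this
      have hx0 : (∑ i, incX sol j i) = 0 := by
        unfold incX
        refine sum_indicator_zero _ (fun i hc => ?_)
        have := harc_fst hc
        simp only [List.mem_cons] at this
        rcases this with h' | h'
        · exact hj h'
        · exact hjnt h'
      rw [hx0, hysum1 j k0 h]; ring
  · -- flow conservation
    intro i
    rcases eq_or_ne tour [] with h | h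
    · have : tourArcs tour = [] := by rw [tourArcs, if_pos h]
      unfold incX
      simp [← htour, this]
    · by_cases hi : i ∈ (0 : Fin (n+1)) :: tour
      · have hin : (∑ j, incX sol j i) = 1 := by
          unfold incX
          refine sum_indicator_unique _ ?_
          rw [tourArcs_eq_zip h]
          obtain ⟨a, ha⟩ := zip_exists_of_snd (le_of_eq hlen.symm) ((hmemv i).2 hi)
          exact ⟨a, ha, fun a' ha' => zip_unique_snd hvnd ha' ha⟩
        have hout : (∑ j, incX sol i j) = 1 := by
          unfold incX
          refine sum_indicator_unique _ ?_
          rw [tourArcs_eq_zip h]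
          obtain ⟨b, hb⟩ := zip_exists_of_fst (le_of_eq hlen) hi
          exact ⟨b, hb, fun b' hb' => zip_unique_fst hlnd hb' hb⟩
        rw [hin, hout]
      · have hin : (∑ j, incX sol j i) = 0 := by
          unfold incX
          exact sum_indicator_zero _ (fun j hc => hi (harc_snd hc))
        have hout : (∑ j, incX sol i j) = 0 := by
          unfold incX
          exact sum_indicator_zero _ (fun j hc => hi (harc_fst hc))
        rw [hin, hout]
  · -- connectivity
    intro S hS0 hSu
    have hex : ∃ j, j ∉ S := by
      by_contra hc
      push_neg at hc
      exact hSu (Finset.eq_univ_iff_forall.2 hc)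
    obtain ⟨j, hjS⟩ := hex
    have hj : j ∈ Sᶜ := Finset.mem_compl.2 hjS
    have hj0 : j ≠ 0 := fun hc => hjS (hc ▸ hS0)
    have hxsum_nn : (0:ℝ) ≤ ∑ i ∈ S, ∑ j' ∈ Sᶜ, incX sol i j' :=
      Finset.sum_nonneg (fun i _ => Finset.sum_nonneg (fun j' _ => hxnn i j'))
    have hysum_nn : (0:ℝ) ≤ ∑ j' ∈ Sᶜ, ∑ k, incY sol j' k :=
      Finset.sum_nonneg (fun j' _ => Finset.sum_nonneg (fun k _ => hynn j' k))
    rcases h : sol.assign j with _ | k0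
    · -- truck customer outside S : crossing arc
      have hjt : j ∈ tour := (sol.tour_mem j).2 ⟨hj0, h⟩
      have hne : tour ≠ [] := List.ne_nil_of_mem hjt
      obtain ⟨p, hp, hp1, hp2⟩ := path_cross (S := S) (tour ++ [(0:Fin (n+1))]) 0 hS0 j
        (by simp [hjt]) hjS
      have hparc : p ∈ tourArcs tour := by
        rw [tourArcs_eq_zt hne]
        exact hp
      have hx_p : incX sol p.1 p.2 = 1 := by
        unfold incX
        rw [if_pos]
        rwa [Prod.mk.eta]
      have h1 : (1:ℝ) ≤ ∑ i ∈ S, ∑ j' ∈ Sᶜ, incX sol i j' := by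
        calc (1:ℝ) = incX sol p.1 p.2 := hx_p.symm
          _ ≤ ∑ j' ∈ Sᶜ, incX sol p.1 j' :=
              Finset.single_le_sum (fun j' _ => hxnn p.1 j') (Finset.mem_compl.2 hp2)
          _ ≤ ∑ i ∈ S, ∑ j' ∈ Sᶜ, incX sol i j' :=
              Finset.single_le_sum (fun i _ => Finset.sum_nonneg (fun j' _ => hxnn i j')) hp1
      linarith
    · -- drone customer outside S
      have h1 : (1:ℝ) ≤ ∑ j' ∈ Sᶜ, ∑ k, incY sol j' k := by
        calc (1:ℝ) = ∑ k, incY sol j k := (hysum1 j k0 h).symm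
          _ ≤ ∑ j' ∈ Sᶜ, ∑ k, incY sol j' k :=
              Finset.single_le_sum (fun j' _ => Finset.sum_nonneg (fun k _ => hynn j' k)) hj
      linarith

end EasyDir

section HardDir

variable {n : ℕ} {U : Type*} [Fintype U] {P : PDSTSP n U}

/-- sum of truck times along consecutive pairs -/
noncomputable def pathSum (P : PDSTSP n U) (l : List (Fin (n+1))) : ℝ :=
  ((zt l).map (fun p => P.tT p.1 p.2)).sum

lemma pathSum_nonneg (l : List (Fin (n+1))) : 0 ≤ pathSum P l := by
  apply List.sum_nonneg
  intro a ha
  obtain ⟨p, _, rfl⟩ := List.mem_map.1 ha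
  exact P.tT_nonneg _ _

lemma pathSum_cons (a : Fin (n+1)) (k : List (Fin (n+1))) (hk : k ≠ []) :
    pathSum P (a :: k) = P.tT a (k.head hk) + pathSum P k := by
  rw [pathSum, zt_cons a k hk]
  simp [pathSum]

lemma pathSum_append (m k : List (Fin (n+1))) (hm : m ≠ []) (hk : k ≠ []) :
    pathSum P (m ++ k) = pathSum P m + P.tT (m.getLast hm) (k.head hk) + pathSum P k := by
  rw [pathSum, zt_append m k hm hk]
  simp only [pathSum, List.map_append, List.sum_append, List.map_cons, List.sum_cons]
  ring

lemma truck_sum_eq_pathSum {tour : List (Fin (n+1))} (h : tour ≠ []) :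
    ((tourArcs tour).map (fun p => P.tT p.1 p.2)).sum = pathSum P ((0 :: tour) ++ [0]) := by
  rw [tourArcs_eq_zt h, pathSum]

lemma walk (A : Finset (Fin (n+1) × Fin (n+1))) (T : Finset (Fin (n+1)))
    (h0T : (0 : Fin (n+1)) ∉ T)
    (hin : ∀ j ∈ T, ∃! i, (i, j) ∈ A)
    (hout : ∀ j ∈ T, ∃! i, (j, i) ∈ A)
    (hsnd : ∀ p ∈ A, p.2 = 0 ∨ p.2 ∈ T) :
    ∀ (fuel : ℕ) (Q : List (Fin (n+1))) (hQ : Q ≠ []), Q.Nodup → (∀ v ∈ Q, v ∈ T) →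
    (∀ p ∈ zt ((0:Fin (n+1)) :: Q), p ∈ A) →
    T.card + 1 ≤ fuel + Q.length →
    ∃ M : List (Fin (n+1)), M ≠ [] ∧ M.Nodup ∧ (∀ v ∈ M, v ∈ T) ∧
      (∀ p ∈ zt (((0:Fin (n+1)) :: M) ++ [0]), p ∈ A) := by
  intro fuel
  induction fuel with
  | zero =>
    intro Q hQ hnd hQT _ hfuel
    exfalso
    have h1 : Q.toFinset ⊆ T := fun v hv => hQT v (List.mem_toFinset.1 hv)
    have h2 := Finset.card_le_card h1
    rw [List.toFinset_card_of_nodup hnd] at h2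
    omega
  | succ f ih =>
    intro Q hQ hnd hQT harcs hfuel
    set c := Q.getLast hQ with hc
    have hcQ : c ∈ Q := List.getLast_mem hQ
    have hcT : c ∈ T := hQT c hcQ
    obtain ⟨s, hs, hsu⟩ := hout c hcT
    have hgl : ((0:Fin (n+1)) :: Q).getLast (by simp) = c := by
      rw [hc, List.getLast_cons hQ]
    rcases eq_or_ne s 0 with rfl | hs0
    · refine ⟨Q, hQ, hnd, hQT, ?_⟩
      intro p hp
      rw [zt_append (0 :: Q) [0] (by simp) (by simp)] at hp
      rcases List.mem_append.1 hp with hp | hp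
      · exact harcs p hp
      · rcases List.mem_cons.1 hp with rfl | hp
        · rw [hgl]; simpa using hs
        · simp at hp
    · -- s is a new customer; extend the path
      have hsT : s ∈ T := by
        rcases hsnd (c, s) hs with h | h
        · exact absurd h hs0
        · exact h
      have hsQ : s ∉ Q := by
        intro hsQ
        obtain ⟨u, hu⟩ := exists_pred (l := (0:Fin (n+1)) :: Q) (by simpa using hsQ)
        have huA : (u, s) ∈ A := harcs _ hu
        obtain ⟨i0, _, hiu⟩ := hin s hsT
        have h1 : u = c := by rw [hiu u huA, ← hiu c hs]
        have h2 : u ∈ ((0:Fin (n+1)) :: Q).dropLast := mem_zt_fst hu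
        rcases Q with _ | ⟨q, Q'⟩
        · exact hQ rfl
        · rw [List.dropLast_cons₂] at h2
          rcases List.mem_cons.1 h2 with h3 | h3
          · exact (fun hc0 : c = 0 => h0T (hc0 ▸ hcT)) (h1 ▸ h3)
          · have hsplit := List.dropLast_append_getLast hQ
            have hnd2 : ((q :: Q').dropLast ++ [c]).Nodup := by
              rw [hc]; rw [hsplit]; exact hnd
            have hdisj := List.disjoint_of_nodup_append hnd2
            exact hdisj (h1 ▸ h3) (by simp)
      have harcs' : ∀ p ∈ zt ((0:Fin (n+1)) :: (Q ++ [s])), p ∈ A := by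
        intro p hp
        have : (0:Fin (n+1)) :: (Q ++ [s]) = ((0:Fin (n+1)) :: Q) ++ [s] := by simp
        rw [this, zt_append (0 :: Q) [s] (by simp) (by simp)] at hp
        rcases List.mem_append.1 hp with hp | hp
        · exact harcs p hp
        · rcases List.mem_cons.1 hp with rfl | hp
          · rw [hgl]; simpa using hs
          · simp at hp
      have hnd' : (Q ++ [s]).Nodup := by
        rw [List.nodup_append]
        exact ⟨hnd, List.nodup_singleton s, by intro a ha b hb hab; simp at hb; subst hb; subst hab; exact hsQ ha⟩
      refine ih (Q ++ [s]) (by simp) hnd' ?_ harcs' (by simp; omega)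
      intro v hv
      rcases List.mem_append.1 hv with hv | hv
      · exact hQT v hv
      · rwa [List.mem_singleton.1 hv]

end HardDir

section CoreDir

variable {n : ℕ} {U : Type*} [Fintype U] {P : PDSTSP n U}

lemma core (P : PDSTSP n U)
    (htri : ∀ i h j : Fin (n + 1), P.tT i j ≤ P.tT i h + P.tT h j) :
    ∀ (N : ℕ) (A : Finset (Fin (n+1) × Fin (n+1))) (T : Finset (Fin (n+1))),
    T.card ≤ N → (0 : Fin (n+1)) ∉ T →
    (∀ j ∈ T, ∃! i, (i, j) ∈ A) →
    (∀ j ∈ T, ∃! i, (j, i) ∈ A) →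
    (∀ p ∈ A, (p.1 = 0 ∨ p.1 ∈ T) ∧ (p.2 = 0 ∨ p.2 ∈ T)) →
    (∀ S : Finset (Fin (n+1)), (0:Fin (n+1)) ∈ S → (∃ t ∈ T, t ∉ S) →
      ∃ p ∈ A, p.1 ∈ S ∧ p.2 ∉ S) →
    ∃ tour : List (Fin (n+1)), tour.Nodup ∧ (∀ v, v ∈ tour ↔ v ∈ T) ∧
      ((tourArcs tour).map (fun p => P.tT p.1 p.2)).sum ≤ ∑ p ∈ A, P.tT p.1 p.2 := by
  intro N
  induction N with
  | zero =>
    intro A T hcard h0T _ _ _ _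
    have hT : T = ∅ := Finset.card_eq_zero.1 (Nat.le_zero.1 hcard)
    refine ⟨[], List.nodup_nil, by simp [hT], ?_⟩
    rw [tourArcs, if_pos rfl]
    simpa using Finset.sum_nonneg (fun p _ => P.tT_nonneg p.1 p.2)
  | succ N ihN =>
    intro A T hcard h0T hin hout hend hconn
    rcases eq_or_ne T ∅ with rfl | hTne
    · refine ⟨[], List.nodup_nil, by simp, ?_⟩
      rw [tourArcs, if_pos rfl]
      simpa using Finset.sum_nonneg (fun p _ => P.tT_nonneg p.1 p.2)
    · obtain ⟨t0, ht0⟩ := Finset.nonempty_iff_ne_empty.2 hTne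
      -- find an arc out of the depot
      obtain ⟨p0, hp0A, hp01, hp02⟩ := hconn {0} (Finset.mem_singleton_self 0)
        ⟨t0, ht0, by simp only [Finset.mem_singleton]; exact fun h => h0T (h ▸ ht0)⟩
      have hp01' : p0.1 = 0 := Finset.mem_singleton.1 hp01
      have hp02' : p0.2 ≠ 0 := by simpa using hp02
      have hbT : p0.2 ∈ T := ((hend p0 hp0A).2).resolve_left hp02'
      set b := p0.2 with hb
      have h0bA : ((0 : Fin (n+1)), b) ∈ A := by
        have : p0 = (0, b) := by rw [← hp01']
        rwa [this] at hp0A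
      -- walk to get a cycle through the depot
      obtain ⟨M, hMne, hMnd, hMT, hMarcs⟩ := walk A T h0T hin hout
        (fun p hp => (hend p hp).2) T.card [b] (by simp) (by simp)
        (by simpa using hbT) (by intro p hp; simp [zt] at hp; simpa [hp] using h0bA)
        (by simp)
      have h0M : (0 : Fin (n+1)) ∉ M := fun h => h0T (hMT 0 h)
      have h0Mnd : ((0:Fin (n+1)) :: M).Nodup := List.nodup_cons.2 ⟨h0M, hMnd⟩
      -- the cycle arcs
      set CycL := zt (((0:Fin (n+1)) :: M) ++ [0]) with hCycL
      have hCycnd : CycL.Nodup := by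
        apply zt_nodup
        rw [List.dropLast_concat]
        exact h0Mnd
      set Cyc := CycL.toFinset with hCyc
      have hCycA : Cyc ⊆ A := by
        intro p hp
        exact hMarcs p (List.mem_toFinset.1 hp)
      have hCycsum : ∑ p ∈ Cyc, P.tT p.1 p.2 = pathSum P (((0:Fin (n+1)) :: M) ++ [0]) := by
        rw [hCyc, List.sum_toFinset _ hCycnd, pathSum]
      -- snd / fst membership of cycle arcs
      have hCyc_snd : ∀ p ∈ CycL, p.2 ∈ M ∨ p.2 = 0 := by
        intro p hp
        have := mem_zt_snd hp
        simp only [List.cons_append, List.tail_cons] at this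
        rcases List.mem_append.1 this with h | h
        · exact Or.inl h
        · exact Or.inr (List.mem_singleton.1 h)
      have hCyc_fst : ∀ p ∈ CycL, p.1 = 0 ∨ p.1 ∈ M := by
        intro p hp
        have := mem_zt_fst hp
        rw [List.dropLast_concat] at this
        simpa using this
      -- reduced instance
      set A' := A \ Cyc with hA'
      set T' := T \ M.toFinset with hT'
      have hT'sub : T' ⊆ T := Finset.sdiff_subset
      have hcardlt : T'.card < T.card := by
        apply Finset.card_lt_card
        rw [Finset.ssubset_iff_of_subset hT'sub]
        obtain ⟨m0, hm0⟩ := List.exists_mem_of_ne_nil M hMne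
        exact ⟨m0, hMT m0 hm0, fun hc => (Finset.mem_sdiff.1 hc).2 (List.mem_toFinset.2 hm0)⟩
      have hT'mem : ∀ v, v ∈ T' ↔ (v ∈ T ∧ v ∉ M) := by
        intro v
        rw [hT', Finset.mem_sdiff, List.mem_toFinset]
      have hin' : ∀ j ∈ T', ∃! i, (i, j) ∈ A' := by
        intro j hj
        obtain ⟨hjT, hjM⟩ := (hT'mem j).1 hj
        obtain ⟨i0, hi0, hiu⟩ := hin j hjT
        refine ⟨i0, ?_, fun i hi => hiu i (Finset.mem_sdiff.1 hi).1⟩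
        show (i0, j) ∈ A \ Cyc
        refine Finset.mem_sdiff.2 ⟨hi0, fun hc => ?_⟩
        rcases hCyc_snd (i0, j) (List.mem_toFinset.1 hc) with h | h
        · exact hjM h
        · exact h0T (h ▸ hjT)
      have hout' : ∀ j ∈ T', ∃! i, (j, i) ∈ A' := by
        intro j hj
        obtain ⟨hjT, hjM⟩ := (hT'mem j).1 hj
        obtain ⟨i0, hi0, hiu⟩ := hout j hjT
        refine ⟨i0, ?_, fun i hi => hiu i (Finset.mem_sdiff.1 hi).1⟩
        show (j, i0) ∈ A \ Cyc
        refine Finset.mem_sdiff.2 ⟨hi0, fun hc => ?_⟩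
        rcases hCyc_fst (j, i0) (List.mem_toFinset.1 hc) with h | h
        · exact h0T (h ▸ hjT)
        · exact hjM h
      have hfstM : ∀ p ∈ A', p.1 ∉ M := by
        intro p hpA' hp1M
        obtain ⟨hpA, hpC⟩ := Finset.mem_sdiff.1 hpA'
        have h1 : p.1 ∈ (((0:Fin (n+1)) :: M) ++ [0]).dropLast := by
          rw [List.dropLast_concat]
          exact List.mem_cons_of_mem _ hp1M
        obtain ⟨w, hw⟩ := exists_succ h1
        have hwA : (p.1, w) ∈ A := hMarcs _ hw
        obtain ⟨i0, _, hiu⟩ := hout p.1 (hMT _ hp1M)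
        have : p.2 = w := by
          have hpA2 : (p.1, p.2) ∈ A := by rw [Prod.mk.eta]; exact hpA
          have e1 := hiu p.2 hpA2
          have e2 := hiu w hwA
          rw [e1, ← e2]
        apply hpC
        rw [hCyc, List.mem_toFinset, ← Prod.mk.eta (p := p), this]
        exact hw
      have hsndM : ∀ p ∈ A', p.2 ∉ M := by
        intro p hpA' hp2M
        obtain ⟨hpA, hpC⟩ := Finset.mem_sdiff.1 hpA'
        have h1 : p.2 ∈ (((0:Fin (n+1)) :: M) ++ [0]).tail := by
          simp only [List.cons_append, List.tail_cons]
          exact List.mem_append.2 (Or.inl hp2M)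
        obtain ⟨u, hu⟩ := exists_pred h1
        have huA : (u, p.2) ∈ A := hMarcs _ hu
        obtain ⟨i0, _, hiu⟩ := hin p.2 (hMT _ hp2M)
        have : p.1 = u := by
          have hpA2 : (p.1, p.2) ∈ A := by rw [Prod.mk.eta]; exact hpA
          have e1 := hiu p.1 hpA2
          have e2 := hiu u huA
          rw [e1, ← e2]
        apply hpC
        rw [hCyc, List.mem_toFinset, ← Prod.mk.eta (p := p), this]
        exact hu
      have hend' : ∀ p ∈ A', (p.1 = 0 ∨ p.1 ∈ T') ∧ (p.2 = 0 ∨ p.2 ∈ T') := by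
        intro p hpA'
        have hpA := (Finset.mem_sdiff.1 hpA').1
        constructor
        · rcases (hend p hpA).1 with h | h
          · exact Or.inl h
          · exact Or.inr ((hT'mem p.1).2 ⟨h, hfstM p hpA'⟩)
        · rcases (hend p hpA).2 with h | h
          · exact Or.inl h
          · exact Or.inr ((hT'mem p.2).2 ⟨h, hsndM p hpA'⟩)
      have hconn' : ∀ S : Finset (Fin (n+1)), (0:Fin (n+1)) ∈ S → (∃ t ∈ T', t ∉ S) →
          ∃ p ∈ A', p.1 ∈ S ∧ p.2 ∉ S := by
        intro S hS0 ⟨t, htT', htS⟩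
        obtain ⟨htT, htM⟩ := (hT'mem t).1 htT'
        obtain ⟨p, hpA, hp1, hp2⟩ := hconn (S ∪ M.toFinset) (Finset.mem_union_left _ hS0)
          ⟨t, htT, fun hc => (Finset.mem_union.1 hc).elim htS (fun h => htM (List.mem_toFinset.1 h))⟩
        have hpA' : p ∈ A' := by
          rw [hA', Finset.mem_sdiff]
          refine ⟨hpA, fun hc => ?_⟩
          apply hp2
          rcases hCyc_snd p (List.mem_toFinset.1 hc) with h | h
          · exact Finset.mem_union_right _ (List.mem_toFinset.2 h)
          · exact Finset.mem_union_left _ (h ▸ hS0)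
        refine ⟨p, hpA', ?_, fun hc => hp2 (Finset.mem_union_left _ hc)⟩
        rcases Finset.mem_union.1 hp1 with h | h
        · exact h
        · exact absurd (List.mem_toFinset.1 h) (hfstM p hpA')
      obtain ⟨tour2, htnd2, htmem2, htcost2⟩ := ihN A' T' (by omega) 
        (fun hc => h0T (hT'sub hc)) hin' hout' hend' hconn'
      -- splice the two cycles together
      have hdisj : ∀ v ∈ M, v ∉ tour2 := by
        intro v hv hc
        exact ((hT'mem v).1 ((htmem2 v).1 hc)).2 hv
      have hsumsplit : ∑ p ∈ A', P.tT p.1 p.2 + ∑ p ∈ Cyc, P.tT p.1 p.2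
          = ∑ p ∈ A, P.tT p.1 p.2 := Finset.sum_sdiff hCycA
      refine ⟨M ++ tour2, ?_, ?_, ?_⟩
      · rw [List.nodup_append]
        exact ⟨hMnd, htnd2, fun a ha b hb hab => hdisj a ha (by rw [hab]; exact hb)⟩
      · intro v
        rw [List.mem_append]
        constructor
        · rintro (h | h)
          · exact hMT v h
          · exact hT'sub ((htmem2 v).1 h)
        · intro hv
          by_cases hM : v ∈ M
          · exact Or.inl hM
          · exact Or.inr ((htmem2 v).2 ((hT'mem v).2 ⟨hv, hM⟩))
      · rcases eq_or_ne tour2 [] with rfl | htne2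
        · rw [List.append_nil]
          rw [truck_sum_eq_pathSum hMne, ← hCycsum, ← hsumsplit]
          have := Finset.sum_nonneg (fun (p : Fin (n+1) × Fin (n+1)) (_ : p ∈ A') => P.tT_nonneg p.1 p.2)
          linarith
        · have hMT2ne : M ++ tour2 ≠ [] := by simp [hMne]
          rw [truck_sum_eq_pathSum hMT2ne]
          have hsplit1 : ((0:Fin (n+1)) :: (M ++ tour2)) ++ [0]
              = ((0:Fin (n+1)) :: M) ++ (tour2 ++ [0]) := by simp
          rw [hsplit1, pathSum_append ((0:Fin (n+1)) :: M) (tour2 ++ [0]) (by simp) (by simp)]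
          have hgl : (((0:Fin (n+1)) :: M)).getLast (by simp) = M.getLast hMne :=
            List.getLast_cons hMne
          have hhd : (tour2 ++ [(0:Fin (n+1))]).head (by simp) = tour2.head htne2 :=
            List.head_append_of_ne_nil htne2
          rw [hgl, hhd]
          have hcyc_eq : pathSum P (((0:Fin (n+1)) :: M) ++ [0])
              = pathSum P ((0:Fin (n+1)) :: M) + P.tT (M.getLast hMne) 0 + pathSum P [0] := by
            rw [pathSum_append ((0:Fin (n+1)) :: M) [0] (by simp) (by simp), hgl]
            rfl
          have htour2_eq : ((tourArcs tour2).map (fun p => P.tT p.1 p.2)).sum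
              = P.tT 0 (tour2.head htne2) + pathSum P (tour2 ++ [0]) := by
            rw [truck_sum_eq_pathSum htne2]
            have : ((0:Fin (n+1)) :: tour2) ++ [0] = (0:Fin (n+1)) :: (tour2 ++ [0]) := by simp
            rw [this, pathSum_cons 0 (tour2 ++ [0]) (by simp), hhd]
          have htriangle := htri (M.getLast hMne) 0 (tour2.head htne2)
          have hps0 : pathSum P [(0:Fin (n+1))] = 0 := by simp [pathSum]
          have hcyc_le : pathSum P (((0:Fin (n+1)) :: M) ++ [0]) = ∑ p ∈ Cyc, P.tT p.1 p.2 :=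
            hCycsum.symm
          rw [htour2_eq] at htcost2
          linarith [pathSum_nonneg (P := P) ((0:Fin (n+1)) :: M),
            pathSum_nonneg (P := P) (tour2 ++ [0])]

end CoreDir

section HardMain

variable {n : ℕ} {U : Type*} [Fintype U] {P : PDSTSP n U}

lemma feasible_to_sol [DecidableEq U]
    (htri : ∀ i h j : Fin (n + 1), P.tT i j ≤ P.tT i h + P.tT h j)
    {x : Fin (n + 1) → Fin (n + 1) → ℝ} {y : Fin (n + 1) → U → ℝ} {α : ℝ}
    (hf : PDSFeasible P x y α) : ∃ sol : PDSSol P, sol.cost ≤ α := by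
  classical
  obtain ⟨hxb, hyb, hysupp, hαx, hαy, hdegin, hdegout, _, hconn⟩ := hf
  have hxnn : ∀ i j, 0 ≤ x i j := fun i j => by rcases hxb i j with h | h <;> simp [h]
  have hynn : ∀ i k, 0 ≤ y i k := fun i k => by rcases hyb i k with h | h <;> simp [h]
  set Dpred : Fin (n+1) → Prop := fun j => ∃ k, y j k = 1 with hDpred
  have hyzero : ∀ j, ¬ Dpred j → ∀ k, y j k = 0 := by
    intro j h k
    exact (hyb j k).resolve_right (fun h1 => h ⟨k, h1⟩)
  have hDCU : ∀ j, Dpred j → j ∈ P.CU := by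
    intro j ⟨k, hk⟩
    by_contra hc
    rw [hysupp j hc k] at hk
    norm_num at hk
  have hD0 : ∀ j, Dpred j → j ≠ 0 := fun j hj h0 => P.hCU (h0 ▸ hDCU j hj)
  -- for drone-served customers : y-row sums to 1 and no incident truck arcs
  have hdrone : ∀ j, Dpred j → (∑ k, y j k) = 1 ∧ (∀ i, x i j = 0) ∧ (∀ i, x j i = 0) := by
    intro j hj
    have hj0 : j ≠ 0 := hD0 j hj
    obtain ⟨k0, hk0⟩ := hj
    have hy1 : (1:ℝ) ≤ ∑ k, y j k := by
      calc (1:ℝ) = y j k0 := hk0.symm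
        _ ≤ ∑ k, y j k := Finset.single_le_sum (fun k _ => hynn j k) (Finset.mem_univ k0)
    have hxin_nn : (0:ℝ) ≤ ∑ i, x i j := Finset.sum_nonneg (fun i _ => hxnn i j)
    have hxout_nn : (0:ℝ) ≤ ∑ i, x j i := Finset.sum_nonneg (fun i _ => hxnn j i)
    have e1 := hdegin j hj0
    have e2 := hdegout j hj0
    have hxin0 : (∑ i, x i j) = 0 := by linarith
    have hxout0 : (∑ i, x j i) = 0 := by linarith
    exact ⟨by linarith, binary_sum_zero (fun i => hxb i j) hxin0,
      binary_sum_zero (fun i => hxb j i) hxout0⟩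
  set T : Finset (Fin (n+1)) := Finset.univ.filter (fun j => j ≠ 0 ∧ ¬ Dpred j) with hT
  have hmemT : ∀ j, j ∈ T ↔ (j ≠ 0 ∧ ¬ Dpred j) := by
    intro j; rw [hT, Finset.mem_filter]; simp
  set A : Finset (Fin (n+1) × Fin (n+1)) :=
    Finset.univ.filter (fun p => x p.1 p.2 = 1) with hA
  have hmemA : ∀ p, p ∈ A ↔ x p.1 p.2 = 1 := by
    intro p; rw [hA, Finset.mem_filter]; simp
  have h0T : (0:Fin (n+1)) ∉ T := fun h => ((hmemT 0).1 h).1 rfl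
  have hin : ∀ j ∈ T, ∃! i, (i, j) ∈ A := by
    intro j hj
    obtain ⟨hj0, hjD⟩ := (hmemT j).1 hj
    have hy0 : (∑ k, y j k) = 0 := Finset.sum_eq_zero (fun k _ => hyzero j hjD k)
    have hx1 : (∑ i, x i j) = 1 := by have := hdegin j hj0; linarith
    obtain ⟨i0, hi0, hiu⟩ := exists_unique_of_binary_sum_one (fun i => hxb i j) hx1
    exact ⟨i0, (hmemA _).2 hi0, fun i hi => hiu i ((hmemA _).1 hi)⟩
  have hout : ∀ j ∈ T, ∃! i, (j, i) ∈ A := by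
    intro j hj
    obtain ⟨hj0, hjD⟩ := (hmemT j).1 hj
    have hy0 : (∑ k, y j k) = 0 := Finset.sum_eq_zero (fun k _ => hyzero j hjD k)
    have hx1 : (∑ i, x j i) = 1 := by have := hdegout j hj0; linarith
    obtain ⟨i0, hi0, hiu⟩ := exists_unique_of_binary_sum_one (fun i => hxb j i) hx1
    exact ⟨i0, (hmemA _).2 hi0, fun i hi => hiu i ((hmemA _).1 hi)⟩
  have hend : ∀ p ∈ A, (p.1 = 0 ∨ p.1 ∈ T) ∧ (p.2 = 0 ∨ p.2 ∈ T) := by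
    intro p hp
    have hx1 : x p.1 p.2 = 1 := (hmemA p).1 hp
    constructor
    · rcases eq_or_ne p.1 0 with h | h
      · exact Or.inl h
      · refine Or.inr ((hmemT p.1).2 ⟨h, fun hD => ?_⟩)
        rw [(hdrone p.1 hD).2.2 p.2] at hx1
        norm_num at hx1
    · rcases eq_or_ne p.2 0 with h | h
      · exact Or.inl h
      · refine Or.inr ((hmemT p.2).2 ⟨h, fun hD => ?_⟩)
        rw [(hdrone p.2 hD).2.1 p.1] at hx1
        norm_num at hx1
  set Dset : Finset (Fin (n+1)) := Finset.univ.filter Dpred with hDset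
  have hconnA : ∀ S : Finset (Fin (n+1)), (0:Fin (n+1)) ∈ S → (∃ t ∈ T, t ∉ S) →
      ∃ p ∈ A, p.1 ∈ S ∧ p.2 ∉ S := by
    intro S hS0 ⟨t, htT, htS⟩
    obtain ⟨ht0, htD⟩ := (hmemT t).1 htT
    set S' := S ∪ Dset with hS'
    have htS' : t ∉ S' := by
      rw [hS', Finset.mem_union]
      rintro (h | h)
      · exact htS h
      · exact htD (Finset.mem_filter.1 h).2
    have hS'ne : S' ≠ Finset.univ := fun hc => htS' (hc ▸ Finset.mem_univ t)
    have h1 := hconn S' (Finset.mem_union_left _ hS0) hS'ne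
    have hy0 : (∑ j ∈ S'ᶜ, ∑ k, y j k) = 0 := by
      refine Finset.sum_eq_zero (fun j hj => Finset.sum_eq_zero (fun k _ => ?_))
      refine hyzero j (fun hD => ?_) k
      exact (Finset.mem_compl.1 hj) (Finset.mem_union_right _ (Finset.mem_filter.2 ⟨Finset.mem_univ j, hD⟩))
    rw [hy0, add_zero] at h1
    have hex : ∃ i ∈ S', ∃ j ∈ S'ᶜ, x i j = 1 := by
      by_contra hc
      push_neg at hc
      have : (∑ i ∈ S', ∑ j ∈ S'ᶜ, x i j) = 0 := by
        refine Finset.sum_eq_zero (fun i hi => Finset.sum_eq_zero (fun j hj => ?_))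
        exact (hxb i j).resolve_right (hc i hi j hj)
      rw [this] at h1
      norm_num at h1
    obtain ⟨i, hiS', j, hjS', hxij⟩ := hex
    have hpA : (i, j) ∈ A := (hmemA _).2 hxij
    refine ⟨(i, j), hpA, ?_, fun hc => (Finset.mem_compl.1 hjS') (Finset.mem_union_left _ hc)⟩
    rcases Finset.mem_union.1 hiS' with h | h
    · exact h
    · exfalso
      have hD : Dpred i := (Finset.mem_filter.1 h).2
      have := (hdrone i hD).2.2 j
      rw [this] at hxij
      norm_num at hxij
  -- extract the tour
  obtain ⟨tour, htnd, htmem, htcost⟩ := core P htri T.card A T le_rfl h0T hin hout hend hconnA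
  -- the truck-arc total cost
  have hAsum : (∑ p ∈ A, P.tT p.1 p.2) ≤ α := by
    refine le_trans ?_ hαx
    rw [← Finset.sum_product']
    rw [hA, Finset.sum_filter]
    refine le_of_eq (Finset.sum_congr (by rw [Finset.univ_product_univ]) (fun p _ => ?_))
    rcases hxb p.1 p.2 with h | h
    · rw [h, if_neg (by norm_num [h]), mul_zero]
    · rw [if_pos h, h, mul_one]
  have hα0 : (0:ℝ) ≤ α := by
    refine le_trans ?_ hαx
    exact Finset.sum_nonneg (fun i _ => Finset.sum_nonneg
      (fun j _ => mul_nonneg (P.tT_nonneg i j) (hxnn i j)))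
  -- build the solution
  set assign : Fin (n+1) → Option U :=
    fun j => if h : Dpred j then some (Classical.choose h) else none with hassign
  have hassign_some : ∀ j, Dpred j → ∃ k, assign j = some k ∧ y j k = 1 := by
    intro j hj
    refine ⟨Classical.choose hj, ?_, Classical.choose_spec hj⟩
    rw [hassign]; simp [hj]
  have hassign_none : ∀ j, ¬ Dpred j → assign j = none := by
    intro j hj; rw [hassign]; simp [hj]
  have hassign_iff : ∀ j, assign j = none ↔ ¬ Dpred j := by
    intro j
    constructor
    · intro h hD
      obtain ⟨k, hk, _⟩ := hassign_some j hD
      rw [h] at hk; cases hk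
    · exact hassign_none j
  have hsol1 : ∀ i, assign i ≠ none → i ∈ P.CU := by
    intro i hi
    refine hDCU i ?_
    by_contra hc
    exact hi (hassign_none i hc)
  have hsol2 : ∀ v, v ∈ tour ↔ (v ≠ 0 ∧ assign v = none) := by
    intro v
    rw [htmem v, hmemT v, hassign_iff v]
  set sol : PDSSol P := ⟨assign, tour, hsol1, htnd, hsol2⟩ with hsol
  have hsa : sol.assign = assign := rfl
  have hst : sol.tour = tour := rfl
  refine ⟨sol, ?_⟩
  rw [PDSSol.cost]
  refine max_le ?_ ?_
  · rw [PDSSol.truckLen, hst]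
    exact le_trans htcost hAsum
  · refine Real.iSup_le (fun k => ?_) hα0
    refine le_trans ?_ (hαy k)
    rw [PDSSol.droneLoad, hsa]
    have hsub : (∑ i ∈ P.CU, P.tU i * y i k)
        = ∑ i : Fin (n+1), (if i ∈ P.CU then P.tU i * y i k else 0) := by
      rw [Finset.sum_ite_mem, Finset.univ_inter]
    rw [hsub]
    refine Finset.sum_le_sum (fun i _ => ?_)
    rcases h : assign i with _ | k'
    · rw [if_neg (fun hc : (none : Option U) = some k => by cases hc)]
      split
      · exact mul_nonneg (P.tU_nonneg i) (hynn i k)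
      · rfl
    · by_cases hk : k' = k
      · subst hk
        rw [if_pos rfl]
        have hD : Dpred i := by
          by_contra hc
          rw [hassign_none i hc] at h
          cases h
        obtain ⟨k2, hk2, hy2⟩ := hassign_some i hD
        rw [h] at hk2
        have : k2 = k' := Option.some_inj.1 hk2.symm
        rw [if_pos (hDCU i hD), ← this, hy2, mul_one]
      · rw [if_neg (fun hc : some k' = some k => hk (Option.some_inj.1 hc))]
        split
        · exact mul_nonneg (P.tU_nonneg i) (hynn i k)
        · rfl

end HardMain

theorem pdsOpt_eq_OPT'
    {n : ℕ} {U : Type*} [Fintype U] [DecidableEq U] (P : PDSTSP n U)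
    (htri : ∀ i h j : Fin (n + 1), P.tT i j ≤ P.tT i h + P.tT h j) :
    pdsOpt P = OPT P := by
  classical
  -- the trivial solution : the truck serves everyone
  have htour0nd : ((List.finRange (n+1)).filter (fun v => v ≠ 0)).Nodup :=
    (List.nodup_finRange (n+1)).filter _
  set sol0 : PDSSol P :=
    ⟨fun _ => none, (List.finRange (n+1)).filter (fun v => v ≠ 0),
      fun i hi => absurd rfl hi, htour0nd,
      fun v => by simp [List.mem_filter, List.mem_finRange]⟩ with hsol0
  have hbddα : BddBelow {α : ℝ | ∃ x y, PDSFeasible P x y α} := by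
    refine ⟨0, fun α hα => ?_⟩
    obtain ⟨x, y, hf⟩ := hα
    have hxb := hf.1
    have hαx := hf.2.2.2.1
    have hxnn : ∀ i j, 0 ≤ x i j := fun i j => by rcases hxb i j with h | h <;> simp [h]
    refine le_trans ?_ hαx
    exact Finset.sum_nonneg (fun i _ => Finset.sum_nonneg
      (fun j _ => mul_nonneg (P.tT_nonneg i j) (hxnn i j)))
  have hbddc : BddBelow {c : ℝ | ∃ sol : PDSSol P, sol.cost = c} := by
    refine ⟨0, fun c hc => ?_⟩
    obtain ⟨sol, rfl⟩ := hc
    refine le_trans ?_ (le_max_left _ _)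
    rw [PDSSol.truckLen]
    refine List.sum_nonneg (fun a ha => ?_)
    obtain ⟨p, _, rfl⟩ := List.mem_map.1 ha
    exact P.tT_nonneg _ _
  have hScne : {c : ℝ | ∃ sol : PDSSol P, sol.cost = c}.Nonempty := ⟨sol0.cost, sol0, rfl⟩
  have hSαne : {α : ℝ | ∃ x y, PDSFeasible P x y α}.Nonempty :=
    ⟨sol0.cost, incX sol0, incY sol0, incFeasible sol0⟩
  rw [pdsOpt, OPT]
  apply le_antisymm
  · refine le_csInf hScne (fun c hc => ?_)
    obtain ⟨sol, rfl⟩ := hc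
    exact csInf_le hbddα ⟨incX sol, incY sol, incFeasible sol⟩
  · refine le_csInf hSαne (fun a ha => ?_)
    obtain ⟨x, y, hf⟩ := ha
    obtain ⟨sol, hcost⟩ := feasible_to_sol htri hf
    exact le_trans (csInf_le hbddc ⟨sol, rfl⟩) hcost

/-- if the (nonnegative) truck travel times satisfy the triangle inequality,
the optimal value of model PDS equals `OPT`, the optimal value of the PDSTSP. -/
theorem pdsOpt_eq_OPT
    {n : ℕ} {U : Type*} [Fintype U] [DecidableEq U] (P : PDSTSP n U)
    (htri : ∀ i h j : Fin (n + 1), P.tT i j ≤ P.tT i h + P.tT h j) :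
    pdsOpt P = OPT P := by
  exact pdsOpt_eq_OPT' P htri
end

section
/- Let x : V × V → {0,1} and y : C^U × U → {0,1} satisfy the degree constraints and the flow conservation constraints. Then the connectivity constraints hold for every proper subset S ⊊ V with 0 ∈ S if and only if every truck-served customer (every j ∈ C with Σ_{k∈U} y_j^k = 0) is reachable from the depot 0 by a directed path in the digraph with arc set {(i,j) : x_{ij} = 1}. -/
/-!
Since all variables are binary, the connectivity constraint for `S ∋ 0` says that some truck arc
leaves `S` or some customer outside `S` is drone-served. If every truck-served customer is
reachable from `0`, a proper `S ∋ 0` misses a customer `j`: either `j` is drone-served, or a path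
from `0` to `j` leaves `S` along an arc. Conversely, take for `S` the nodes reachable from `0`
together with the drone-served customers. By the out-degree constraint a drone-served customer
has no outgoing arc, so no arc leaves `S`, and no customer outside `S` is drone-served; the
connectivity constraint therefore forces `S` to be everything.
-/

open Finset

theorem Relation.ReflTransGen.exists_rel_leaving {α : Type*} {r : α → α → Prop} {P : α → Prop}
    {a b : α} (h : Relation.ReflTransGen r a b) (ha : P a) (hb : ¬ P b) :
    ∃ p q, P p ∧ ¬ P q ∧ r p q := by
  induction h with
  | refl => exact absurd ha hb
  | @tail c d _ hcd ih =>
    by_cases hc : P c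
    · exact ⟨c, d, hc, hb, hcd⟩
    · exact ih hc

theorem nonneg_of_eq_zero_or_eq_one {R : Type*} [Zero R] [One R] [Preorder R] [ZeroLEOneClass R]
    {a : R} (h : a = 0 ∨ a = 1) : 0 ≤ a := by
  rcases h with rfl | rfl
  exacts [le_rfl, zero_le_one]

theorem Finset.one_le_sum_of_ne_zero {R ι : Type*} [AddCommMonoid R] [PartialOrder R]
    [IsOrderedAddMonoid R] [One R] [ZeroLEOneClass R] {s : Finset ι} {f : ι → R}
    (hf : ∀ i ∈ s, f i = 0 ∨ f i = 1) (h : ∑ i ∈ s, f i ≠ 0) : 1 ≤ ∑ i ∈ s, f i := by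
  obtain ⟨i, hi, hfi⟩ := exists_ne_zero_of_sum_ne_zero h
  calc (1 : R) = f i := ((hf i hi).resolve_left hfi).symm
    _ ≤ ∑ i ∈ s, f i := single_le_sum (fun j hj => nonneg_of_eq_zero_or_eq_one (hf j hj)) hi

section Cut

variable {V U : Type*} [Fintype V] [DecidableEq V] [Fintype U]

def cutValue (x : V → V → ℝ) (y : V → U → ℝ) (S : Finset V) : ℝ :=
  (∑ i ∈ S, ∑ j ∈ Sᶜ, x i j) + (∑ j ∈ Sᶜ, ∑ k, y j k)

variable {x : V → V → ℝ} {y : V → U → ℝ} {S : Finset V}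

theorem le_cutValue_of_mem_of_notMem (hx : ∀ i j, 0 ≤ x i j) (hy : ∀ j k, 0 ≤ y j k)
    {p q : V} (hp : p ∈ S) (hq : q ∉ S) : x p q ≤ cutValue x y S := by
  have hrow : x p q ≤ ∑ j ∈ Sᶜ, x p j :=
    single_le_sum (fun j _ => hx p j) (mem_compl.mpr hq)
  have hcut : ∑ j ∈ Sᶜ, x p j ≤ ∑ i ∈ S, ∑ j ∈ Sᶜ, x i j :=
    single_le_sum (fun i _ => sum_nonneg fun j _ => hx i j) hp
  have hdrone : 0 ≤ ∑ j ∈ Sᶜ, ∑ k, y j k := sum_nonneg fun j _ => sum_nonneg fun k _ => hy j k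
  unfold cutValue
  linarith

theorem sum_le_cutValue_of_notMem (hx : ∀ i j, 0 ≤ x i j) (hy : ∀ j k, 0 ≤ y j k)
    {j : V} (hj : j ∉ S) : ∑ k, y j k ≤ cutValue x y S := by
  have hdrone : ∑ k, y j k ≤ ∑ j ∈ Sᶜ, ∑ k, y j k :=
    single_le_sum (fun j _ => sum_nonneg fun k _ => hy j k) (mem_compl.mpr hj)
  have hcut : 0 ≤ ∑ i ∈ S, ∑ j ∈ Sᶜ, x i j := sum_nonneg fun i _ => sum_nonneg fun j _ => hx i j
  unfold cutValue
  linarith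

theorem cutValue_eq_zero (hx : ∀ i j, x i j = 0 ∨ x i j = 1)
    (hclosed : ∀ i ∈ S, ∀ j, x i j = 1 → j ∈ S) (hdrone : ∀ j ∉ S, ∑ k, y j k = 0) :
    cutValue x y S = 0 := by
  have harcs : ∀ i ∈ S, ∀ j ∈ Sᶜ, x i j = 0 := fun i hi j hj =>
    (hx i j).resolve_right fun h => mem_compl.mp hj (hclosed i hi j h)
  rw [cutValue, sum_eq_zero fun i hi => sum_eq_zero (harcs i hi),
    sum_eq_zero fun j hj => hdrone j (mem_compl.mp hj), add_zero]

variable (d : V)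

theorem one_le_cutValue_of_reachable (hx : ∀ i j, x i j = 0 ∨ x i j = 1)
    (hy : ∀ j k, y j k = 0 ∨ y j k = 1)
    (hreach : ∀ j, j ≠ d → ∑ k, y j k = 0 → Relation.ReflTransGen (fun a b => x a b = 1) d j)
    (hdS : d ∈ S) (hS : S ≠ univ) : 1 ≤ cutValue x y S := by
  have hx₀ i j := nonneg_of_eq_zero_or_eq_one (hx i j)
  have hy₀ j k := nonneg_of_eq_zero_or_eq_one (hy j k)
  obtain ⟨j, hj⟩ : ∃ j, j ∉ S := by simpa [eq_univ_iff_forall] using hS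
  by_cases hjy : ∑ k, y j k = 0
  · obtain ⟨p, q, hp, hq, hpq⟩ :=
      (hreach j (ne_of_mem_of_not_mem hdS hj).symm hjy).exists_rel_leaving hdS hj
    exact hpq ▸ le_cutValue_of_mem_of_notMem hx₀ hy₀ hp hq
  · exact (one_le_sum_of_ne_zero (fun k _ => hy j k) hjy).trans
      (sum_le_cutValue_of_notMem hx₀ hy₀ hj)

theorem reachable_of_one_le_cutValue (hx : ∀ i j, x i j = 0 ∨ x i j = 1)
    (hy : ∀ j k, y j k = 0 ∨ y j k = 1)
    (hdegOut : ∀ j, j ≠ d → (∑ i, x j i) + (∑ k, y j k) = 1)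
    (hcut : ∀ S : Finset V, d ∈ S → S ≠ univ → 1 ≤ cutValue x y S)
    {j : V} (hj : ∑ k, y j k = 0) : Relation.ReflTransGen (fun a b => x a b = 1) d j := by
  classical
  set reach := Relation.ReflTransGen (fun a b => x a b = 1) d
  set S : Finset V := univ.filter fun i => reach i ∨ ∑ k, y i k ≠ 0
  have hmem i : i ∈ S ↔ reach i ∨ ∑ k, y i k ≠ 0 := by simp [S]
  have hdS : d ∈ S := (hmem d).mpr (Or.inl .refl)
  have hno_arc (i : V) (hi : i ≠ d) (hiy : ∑ k, y i k ≠ 0) (q : V) : x i q ≠ 1 := by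
    have hrow : x i q ≤ ∑ j, x i j :=
      single_le_sum (fun j _ => nonneg_of_eq_zero_or_eq_one (hx i j)) (mem_univ q)
    have := one_le_sum_of_ne_zero (fun k _ => hy i k) hiy
    linarith [hdegOut i hi]
  have hclosed : ∀ i ∈ S, ∀ q, x i q = 1 → q ∈ S := by
    intro i hi q hiq
    refine (hmem q).mpr (Or.inl ?_)
    rcases (hmem i).mp hi with hri | hiy
    · exact hri.tail hiq
    · by_cases hid : i = d
      · subst hid
        exact .single hiq
      · exact absurd hiq (hno_arc i hid hiy q)
  have hdrone : ∀ i ∉ S, ∑ k, y i k = 0 := fun i hi =>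
    not_not.mp fun h => hi ((hmem i).mpr (.inr h))
  have hS : S = univ := by
    by_contra hS
    have := hcut S hdS hS
    rw [cutValue_eq_zero hx hclosed hdrone] at this
    exact zero_lt_one.not_ge this
  exact ((hmem j).mp (hS ▸ mem_univ j)).resolve_right (not_not.mpr hj)

end Cut

theorem connectivity_iff_reachable_general
    {n : ℕ} {U : Type*} [Fintype U]
    (x : Fin (n + 1) → Fin (n + 1) → ℝ) (y : Fin (n + 1) → U → ℝ)
    (hx : ∀ i j, x i j = 0 ∨ x i j = 1)
    (hy : ∀ i k, y i k = 0 ∨ y i k = 1)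
    (hdegOut : ∀ j : Fin (n + 1), j ≠ 0 → (∑ i, x j i) + (∑ k, y j k) = 1) :
    (∀ S : Finset (Fin (n + 1)), (0 : Fin (n + 1)) ∈ S → S ≠ Finset.univ →
        1 ≤ (∑ i ∈ S, ∑ j ∈ Sᶜ, x i j) + (∑ j ∈ Sᶜ, ∑ k, y j k)) ↔
    (∀ j : Fin (n + 1), j ≠ 0 → (∑ k, y j k) = 0 →
        Relation.ReflTransGen (fun a b => x a b = 1) 0 j) :=
  ⟨fun hcut _ _ hj => reachable_of_one_le_cutValue 0 hx hy hdegOut hcut hj,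
    fun hreach _ hdS hS => one_le_cutValue_of_reachable 0 hx hy hreach hdS hS⟩

/-- for binary `x`, `y` satisfying the degree constraints and the flow
conservation constraints, all connectivity constraints hold if and only if every
truck-served customer is reachable from the depot `0` by a directed path in the digraph
with arc set `{(i,j) : x i j = 1}`. -/
theorem connectivity_iff_reachable
    {n : ℕ} {U : Type*} [Fintype U]
    (CU : Finset (Fin (n + 1))) (hCU : (0 : Fin (n + 1)) ∉ CU)
    (x : Fin (n + 1) → Fin (n + 1) → ℝ) (y : Fin (n + 1) → U → ℝ)
    (hx : ∀ i j, x i j = 0 ∨ x i j = 1)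
    (hy : ∀ i k, y i k = 0 ∨ y i k = 1)
    (hyCU : ∀ i, i ∉ CU → ∀ k, y i k = 0)
    (hdegIn : ∀ j : Fin (n + 1), j ≠ 0 → (∑ i, x i j) + (∑ k, y j k) = 1)
    (hdegOut : ∀ j : Fin (n + 1), j ≠ 0 → (∑ i, x j i) + (∑ k, y j k) = 1)
    (hflow : ∀ i : Fin (n + 1), (∑ j, x j i) = (∑ j, x i j)) :
    (∀ S : Finset (Fin (n + 1)), (0 : Fin (n + 1)) ∈ S → S ≠ Finset.univ →
        1 ≤ (∑ i ∈ S, ∑ j ∈ Sᶜ, x i j) + (∑ j ∈ Sᶜ, ∑ k, y j k)) ↔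
    (∀ j : Fin (n + 1), j ≠ 0 → (∑ k, y j k) = 0 →
        Relation.ReflTransGen (fun a b => x a b = 1) 0 j) :=
  connectivity_iff_reachable_general x y hx hy hdegOut
end

section
/- Let x : V × V → {0,1} and y : C^U × U → {0,1} satisfy the degree constraints, the flow conservation constraints, and all connectivity constraints. Then every truck-served customer (every j ∈ C with Σ_{k∈U} y_j^k = 0) lies on a directed cycle of the digraph with arc set {(i,j) : x_{ij} = 1} that contains the depot 0. -/
open Finset

lemma bin_nonneg {ι : Type*} {f : ι → ℝ} (hf : ∀ i, f i = 0 ∨ f i = 1) (i : ι) : 0 ≤ f i := by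
  rcases hf i with h | h <;> rw [h] <;> norm_num

lemma bin_exists_of_sum_one {ι : Type*} [Fintype ι] {f : ι → ℝ}
    (hf : ∀ i, f i = 0 ∨ f i = 1) (h1 : (∑ i, f i) = 1) : ∃ u, f u = 1 := by
  by_contra h
  push_neg at h
  have h0 : (∑ i, f i) = 0 := Finset.sum_eq_zero fun i _ => (hf i).resolve_right (h i)
  rw [h0] at h1; norm_num at h1

lemma bin_unique_of_sum_one {ι : Type*} [Fintype ι] [DecidableEq ι] {f : ι → ℝ}
    (hf : ∀ i, f i = 0 ∨ f i = 1) (h1 : (∑ i, f i) = 1) {a b : ι}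
    (ha : f a = 1) (hb : f b = 1) : a = b := by
  by_contra hne
  have hle : ∑ i ∈ ({a, b} : Finset ι), f i ≤ ∑ i, f i :=
    Finset.sum_le_sum_of_subset_of_nonneg (Finset.subset_univ _)
      (fun i _ _ => bin_nonneg hf i)
  rw [Finset.sum_pair hne, ha, hb, h1] at hle
  norm_num at hle

lemma bin_single_le_sum {ι : Type*} [Fintype ι] {f : ι → ℝ}
    (hf : ∀ i, f i = 0 ∨ f i = 1) {a : ι} (ha : f a = 1) : 1 ≤ ∑ i, f i := by
  rw [← ha]
  exact Finset.single_le_sum (fun i _ => bin_nonneg hf i) (Finset.mem_univ a)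

lemma iter_mod {α : Type*} (f : α → α) (j : α) (a q : ℕ) (hq : 0 < q)
    (hper : f^[a + q] j = f^[a] j) : ∀ c, f^[a + c] j = f^[a + c % q] j := by
  intro c
  induction c using Nat.strong_induction_on with
  | _ c ih =>
    rcases lt_or_ge c q with h | h
    · rw [Nat.mod_eq_of_lt h]
    · have h1 : f^[a + c] j = f^[a + (c - q)] j := by
        have e : a + c = (c - q) + (a + q) := by omega
        rw [e, Function.iterate_add_apply, hper, ← Function.iterate_add_apply]
        congr 1
        omega
      have e2 : c % q = (c - q) % q := by
        conv_lhs => rw [show c = (c - q) + q by omega, Nat.add_mod_right]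
      rw [h1, ih (c - q) (by omega), e2]

lemma iter_min_distinct {α : Type*} (f : α → α) (j z : α)
    (k : ℕ) (hk : f^[k] j = z) (hmin : ∀ i < k, f^[i] j ≠ z) :
    ∀ a b, a < b → b < k → f^[a] j ≠ f^[b] j := by
  intro a b hab hbk heq
  have hper : f^[a + (b - a)] j = f^[a] j := by
    rw [show a + (b - a) = b by omega]; exact heq.symm
  have hm := iter_mod f j a (b - a) (by omega) hper (k - a)
  rw [show a + (k - a) = k by omega, hk] at hm
  have hlt : (k - a) % (b - a) < b - a := Nat.mod_lt _ (by omega)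
  exact hmin _ (by omega) hm.symm

/-- If `v ≠ 0` receives an arc, then `v` has in-degree exactly 1, zero drone service,
and out-degree exactly 1. -/
lemma indeg_of_arc {n : ℕ} {U : Type*} [Fintype U]
    (x : Fin (n+1) → Fin (n+1) → ℝ) (y : Fin (n+1) → U → ℝ)
    (hx : ∀ i j, x i j = 0 ∨ x i j = 1)
    (hy0 : ∀ i k, 0 ≤ y i k)
    (hdegIn : ∀ j : Fin (n+1), j ≠ 0 → (∑ i, x i j) + (∑ k, y j k) = 1)
    (hflow : ∀ i : Fin (n+1), (∑ j, x j i) = (∑ j, x i j))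
    {u v : Fin (n+1)} (huv : x u v = 1) (hv : v ≠ 0) :
    (∑ i, x i v) = 1 ∧ (∑ k, y v k) = 0 ∧ (∑ i, x v i) = 1 := by
  have h1 : 1 ≤ ∑ i, x i v := bin_single_le_sum (fun i => hx i v) huv
  have hy' : 0 ≤ ∑ k, y v k := Finset.sum_nonneg fun k _ => hy0 v k
  have hd := hdegIn v hv
  have hin : (∑ i, x i v) = 1 := le_antisymm (by linarith) h1
  have hyz : (∑ k, y v k) = 0 := by linarith
  exact ⟨hin, hyz, by rw [← hflow v]; exact hin⟩

lemma reaches_zero {n : ℕ} {U : Type*} [Fintype U]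
    (x : Fin (n+1) → Fin (n+1) → ℝ) (y : Fin (n+1) → U → ℝ)
    (hx : ∀ i j, x i j = 0 ∨ x i j = 1)
    (hy0 : ∀ i k, 0 ≤ y i k)
    (hdegIn : ∀ j : Fin (n+1), j ≠ 0 → (∑ i, x i j) + (∑ k, y j k) = 1)
    (hflow : ∀ i : Fin (n+1), (∑ j, x j i) = (∑ j, x i j))
    (hconn : ∀ S : Finset (Fin (n+1)), (0 : Fin (n+1)) ∈ S → S ≠ Finset.univ →
        1 ≤ (∑ i ∈ S, ∑ j ∈ Sᶜ, x i j) + (∑ j ∈ Sᶜ, ∑ k, y j k))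
    (s : Fin (n+1) → Fin (n+1))
    (hs : ∀ v : Fin (n+1), v ≠ 0 → (∑ i, x v i) = 1 → x v (s v) = 1)
    (j : Fin (n+1)) (hj : j ≠ 0) (hjout : (∑ i, x j i) = 1) :
    ∃ c, s^[c] j = 0 := by
  by_contra hcon
  push_neg at hcon
  -- out-degree 1 all along the orbit
  have claimOut : ∀ c, (∑ i, x (s^[c] j) i) = 1 := by
    intro c
    induction c with
    | zero => simpa using hjout
    | succ c ih =>
      have harc : x (s^[c] j) (s^[c+1] j) = 1 := by
        rw [Function.iterate_succ_apply']
        exact hs _ (hcon c) ih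
      exact (indeg_of_arc x y hx hy0 hdegIn hflow harc (hcon (c+1))).2.2
  have claimArc : ∀ c, x (s^[c] j) (s^[c+1] j) = 1 := by
    intro c
    rw [Function.iterate_succ_apply']
    exact hs _ (hcon c) (claimOut c)
  have claimIn : ∀ c, (∑ i, x i (s^[c+1] j)) = 1 ∧ (∑ k, y (s^[c+1] j) k) = 0 := by
    intro c
    have h := indeg_of_arc x y hx hy0 hdegIn hflow (claimArc c) (hcon (c+1))
    exact ⟨h.1, h.2.1⟩
  -- pigeonhole
  obtain ⟨a', b', hne, heq⟩ := Finite.exists_ne_map_eq_of_infinite (fun c : ℕ => s^[c] j)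
  rcases hne.lt_or_gt with hab | hab
  all_goals {
    first
      | (have hper : s^[a' + (b' - a')] j = s^[a'] j := by
          rw [show a' + (b' - a') = b' by omega]; exact heq.symm)
      | (have hper : s^[b' + (a' - b')] j = s^[b'] j := by
          rw [show b' + (a' - b') = a' by omega]; exact heq)
    first
      | (have key : ∃ a q : ℕ, 0 < q ∧ s^[a + q] j = s^[a] j := ⟨a', b' - a', by omega, hper⟩)
      | (have key : ∃ a q : ℕ, 0 < q ∧ s^[a + q] j = s^[a] j := ⟨b', a' - b', by omega, hper⟩)
    obtain ⟨a, q, hq, hper'⟩ := key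
    have hmod := iter_mod s j a q hq hper'
    set T : Finset (Fin (n+1)) :=
      Finset.image (fun i => s^[a + i] j) (Finset.range q) with hT
    have hmemT : ∀ t ∈ T, ∃ i, i < q ∧ t = s^[a + i] j := by
      intro t ht
      rw [hT, Finset.mem_image] at ht
      obtain ⟨i, hi, rfl⟩ := ht
      exact ⟨i, Finset.mem_range.mp hi, rfl⟩
    have htne : ∀ t ∈ T, t ≠ 0 := by
      intro t ht
      obtain ⟨i, _, rfl⟩ := hmemT t ht
      exact hcon _
    -- each t ∈ T : indeg 1, ydeg 0, predecessor in T
    have tstruct : ∀ t ∈ T, (∑ i, x i t) = 1 ∧ (∑ k, y t k) = 0 ∧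
        ∃ u ∈ T, x u t = 1 := by
      intro t ht
      obtain ⟨i, hi, rfl⟩ := hmemT t ht
      have hrep : s^[a + i] j = s^[(a + i + q - 1) + 1] j := by
        rw [show (a + i + q - 1) + 1 = a + (i + q) by omega, hmod (i + q),
          show (i + q) % q = i from by rw [Nat.add_mod_right, Nat.mod_eq_of_lt hi]]
      constructor
      · rw [hrep]; exact (claimIn _).1
      constructor
      · rw [hrep]; exact (claimIn _).2
      · refine ⟨s^[a + i + q - 1] j, ?_, ?_⟩
        · have : s^[a + i + q - 1] j = s^[a + (i + q - 1) % q] j := by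
            rw [show a + i + q - 1 = a + (i + q - 1) by omega]
            exact hmod (i + q - 1)
          rw [this, hT, Finset.mem_image]
          exact ⟨(i + q - 1) % q, Finset.mem_range.mpr (Nat.mod_lt _ hq), rfl⟩
        · rw [hrep, show a + i + q - 1 = (a + i + q - 1) by rfl]
          exact claimArc _
    -- connectivity contradiction with S = Tᶜ
    have h0S : (0 : Fin (n+1)) ∈ Tᶜ := by
      rw [Finset.mem_compl]
      intro h0
      exact htne 0 h0 rfl
    have hSne : Tᶜ ≠ Finset.univ := by
      intro h
      have hmem : s^[a + 0] j ∈ T := by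
        rw [hT, Finset.mem_image]
        exact ⟨0, Finset.mem_range.mpr hq, rfl⟩
      have := (Finset.compl_eq_univ_iff T).mp h
      rw [this] at hmem
      exact absurd hmem (Finset.notMem_empty _)
    have hc := hconn Tᶜ h0S hSne
    rw [compl_compl] at hc
    have hz1 : (∑ i ∈ Tᶜ, ∑ t ∈ T, x i t) = 0 := by
      refine Finset.sum_eq_zero fun i hi => Finset.sum_eq_zero fun t ht => ?_
      obtain ⟨hin, _, u, huT, hu⟩ := tstruct t ht
      rcases hx i t with h | h
      · exact h
      · exfalso
        have hiu : i = u := bin_unique_of_sum_one (fun w => hx w t) hin h hu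
        exact (Finset.mem_compl.mp hi) (hiu ▸ huT)
    have hz2 : (∑ t ∈ T, ∑ k, y t k) = 0 :=
      Finset.sum_eq_zero fun t ht => (tstruct t ht).2.1
    rw [hz1, hz2] at hc
    norm_num at hc
  }

open Classical in
/-- The successor (chosen out-neighbour) of a node in the digraph of `x`, fixing `0`. -/
noncomputable def succOf {n : ℕ} (x : Fin (n+1) → Fin (n+1) → ℝ) : Fin (n+1) → Fin (n+1) :=
  fun v => if h : v ≠ 0 ∧ ∃ u, x v u = 1 then h.2.choose else 0

lemma succOf_zero {n : ℕ} (x : Fin (n+1) → Fin (n+1) → ℝ) : succOf x 0 = 0 := by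
  unfold succOf
  rw [dif_neg]
  simp

lemma succOf_spec {n : ℕ} (x : Fin (n+1) → Fin (n+1) → ℝ) {v : Fin (n+1)}
    (hv : v ≠ 0) (h : ∃ u, x v u = 1) : x v (succOf x v) = 1 := by
  unfold succOf
  rw [dif_pos ⟨hv, h⟩]
  exact h.choose_spec

/-- for binary `x`, `y` satisfying the degree constraints, the flow
conservation constraints and all connectivity constraints, every truck-served customer
lies on a directed cycle of the digraph `{(i,j) : x i j = 1}` that contains the depot. -/
theorem truck_customer_on_cycle_through_depot
    {n : ℕ} {U : Type*} [Fintype U]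
    (CU : Finset (Fin (n + 1))) (hCU : (0 : Fin (n + 1)) ∉ CU)
    (x : Fin (n + 1) → Fin (n + 1) → ℝ) (y : Fin (n + 1) → U → ℝ)
    (hx : ∀ i j, x i j = 0 ∨ x i j = 1)
    (hy : ∀ i k, y i k = 0 ∨ y i k = 1)
    (hyCU : ∀ i, i ∉ CU → ∀ k, y i k = 0)
    (hdegIn : ∀ j : Fin (n + 1), j ≠ 0 → (∑ i, x i j) + (∑ k, y j k) = 1)
    (hdegOut : ∀ j : Fin (n + 1), j ≠ 0 → (∑ i, x j i) + (∑ k, y j k) = 1)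
    (hflow : ∀ i : Fin (n + 1), (∑ j, x j i) = (∑ j, x i j))
    (hconn : ∀ S : Finset (Fin (n + 1)), (0 : Fin (n + 1)) ∈ S → S ≠ Finset.univ →
        1 ≤ (∑ i ∈ S, ∑ j ∈ Sᶜ, x i j) + (∑ j ∈ Sᶜ, ∑ k, y j k)) :
    ∀ j : Fin (n + 1), j ≠ 0 → (∑ k, y j k) = 0 →
      ∃ l : List (Fin (n + 1)), l ≠ [] ∧ l.Nodup ∧
        (∀ a ∈ cycleArcs l, x a.1 a.2 = 1) ∧ (0 : Fin (n + 1)) ∈ l ∧ j ∈ l := by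
  intro j hj hyj
  have hy0 : ∀ i k, 0 ≤ y i k := fun i k => bin_nonneg (hy i) k
  -- degrees of j
  have hjout : (∑ i, x j i) = 1 := by have := hdegOut j hj; rw [hyj] at this; linarith
  have hjin : (∑ i, x i j) = 1 := by have := hdegIn j hj; rw [hyj] at this; linarith
  -- the transposed arc variables
  set x' : Fin (n+1) → Fin (n+1) → ℝ := fun a b => x b a with hx'def
  have hx'bin : ∀ i j', x' i j' = 0 ∨ x' i j' = 1 := fun i j' => hx j' i
  have hflow' : ∀ i, (∑ j', x' j' i) = (∑ j', x' i j') := fun i => (hflow i).symm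
  have hdegIn' : ∀ v : Fin (n+1), v ≠ 0 → (∑ i, x' i v) + (∑ k, y v k) = 1 :=
    fun v hv => hdegOut v hv
  -- cut balance from flow conservation
  have cutbal : ∀ S : Finset (Fin (n+1)),
      (∑ i ∈ S, ∑ j' ∈ Sᶜ, x i j') = (∑ i ∈ S, ∑ j' ∈ Sᶜ, x j' i) := by
    intro S
    have h1 : (∑ i ∈ S, ∑ j', x j' i) = ∑ i ∈ S, ∑ j', x i j' :=
      Finset.sum_congr rfl (fun i _ => hflow i)
    have ha : (∑ i ∈ S, ∑ j', x i j') =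
        (∑ i ∈ S, ∑ j' ∈ S, x i j') + (∑ i ∈ S, ∑ j' ∈ Sᶜ, x i j') := by
      rw [← Finset.sum_add_distrib]
      exact Finset.sum_congr rfl (fun i _ => (Finset.sum_add_sum_compl S (x i)).symm)
    have hb : (∑ i ∈ S, ∑ j', x j' i) =
        (∑ i ∈ S, ∑ j' ∈ S, x j' i) + (∑ i ∈ S, ∑ j' ∈ Sᶜ, x j' i) := by
      rw [← Finset.sum_add_distrib]
      exact Finset.sum_congr rfl (fun i _ => (Finset.sum_add_sum_compl S (fun u => x u i)).symm)
    have h3 : (∑ i ∈ S, ∑ j' ∈ S, x j' i) = ∑ i ∈ S, ∑ j' ∈ S, x i j' := Finset.sum_comm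
    linarith
  have hconn' : ∀ S : Finset (Fin (n+1)), (0 : Fin (n+1)) ∈ S → S ≠ Finset.univ →
      1 ≤ (∑ i ∈ S, ∑ j' ∈ Sᶜ, x' i j') + (∑ j' ∈ Sᶜ, ∑ k, y j' k) := by
    intro S h0 hne
    have h := hconn S h0 hne
    have : (∑ i ∈ S, ∑ j' ∈ Sᶜ, x' i j') = ∑ i ∈ S, ∑ j' ∈ Sᶜ, x i j' := (cutbal S).symm
    linarith
  -- successor and predecessor maps
  set s : Fin (n+1) → Fin (n+1) := succOf x with hsdef
  set p : Fin (n+1) → Fin (n+1) := succOf x' with hpdef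
  have hs0 : s 0 = 0 := succOf_zero x
  have hp0 : p 0 = 0 := succOf_zero x'
  have hs : ∀ v : Fin (n+1), v ≠ 0 → (∑ i, x v i) = 1 → x v (s v) = 1 := fun v hv h1 =>
    succOf_spec x hv (bin_exists_of_sum_one (hx v) h1)
  have hp : ∀ v : Fin (n+1), v ≠ 0 → (∑ i, x i v) = 1 → x (p v) v = 1 := fun v hv h1 =>
    succOf_spec x' hv (bin_exists_of_sum_one (fun u => hx u v) h1)
  -- forward and backward walks reach the depot
  have kex : ∃ c, s^[c] j = 0 :=
    reaches_zero x y hx hy0 hdegIn hflow hconn s hs j hj hjout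
  have mex : ∃ c, p^[c] j = 0 :=
    reaches_zero x' y hx'bin hy0 hdegIn' hflow' hconn' p
      (fun v hv h1 => hp v hv h1) j hj hjin
  obtain ⟨k, hk, hmink⟩ : ∃ k, s^[k] j = 0 ∧ ∀ i < k, s^[i] j ≠ 0 :=
    ⟨Nat.find kex, Nat.find_spec kex, fun i hi => Nat.find_min kex hi⟩
  obtain ⟨m, hm, hminm⟩ : ∃ m, p^[m] j = 0 ∧ ∀ i < m, p^[i] j ≠ 0 :=
    ⟨Nat.find mex, Nat.find_spec mex, fun i hi => Nat.find_min mex hi⟩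
  have hk1 : 0 < k := Nat.pos_of_ne_zero (fun h => hj (by simpa [h] using hk))
  have hm1 : 0 < m := Nat.pos_of_ne_zero (fun h => hj (by simpa [h] using hm))
  -- structure along the forward path
  have Afwd : ∀ c, c < k → (∑ i, x (s^[c] j) i) = 1 := by
    intro c
    induction c with
    | zero => intro _; simpa using hjout
    | succ c ih =>
      intro hc
      have hc' : c < k := by omega
      have harc : x (s^[c] j) (s^[c+1] j) = 1 := by
        rw [Function.iterate_succ_apply']
        exact hs _ (hmink c hc') (ih hc')
      exact (indeg_of_arc x y hx hy0 hdegIn hflow harc (hmink _ hc)).2.2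
  have arcf : ∀ c, c < k → x (s^[c] j) (s^[c+1] j) = 1 := by
    intro c hc
    rw [Function.iterate_succ_apply']
    exact hs _ (hmink c hc) (Afwd c hc)
  -- structure along the backward path
  have Bbwd : ∀ c, c < m → (∑ i, x i (p^[c] j)) = 1 := by
    intro c
    induction c with
    | zero => intro _; simpa using hjin
    | succ c ih =>
      intro hc
      have hc' : c < m := by omega
      have harc : x' (p^[c] j) (p^[c+1] j) = 1 := by
        rw [Function.iterate_succ_apply']
        exact hp _ (hminm c hc') (ih hc')
      exact (indeg_of_arc x' y hx'bin hy0 hdegIn' hflow' harc (hminm _ hc)).2.2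
  have arcb : ∀ c, c < m → x (p^[c+1] j) (p^[c] j) = 1 := by
    intro c hc
    rw [Function.iterate_succ_apply']
    exact hp _ (hminm c hc) (Bbwd c hc)
  -- out-degree of interior backward nodes
  have outdeg_w : ∀ c, 1 ≤ c → c < m → (∑ i, x (p^[c] j) i) = 1 := by
    intro c h1 h2
    have harc : x (p^[c] j) (p^[c-1] j) = 1 := by
      have h := arcb (c-1) (by omega)
      rwa [show c - 1 + 1 = c by omega] at h
    have hge : 1 ≤ ∑ i, x (p^[c] j) i := bin_single_le_sum (hx _) harc
    have hd := hdegOut _ (hminm c h2)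
    have hy' : 0 ≤ ∑ kk, y (p^[c] j) kk := Finset.sum_nonneg fun kk _ => hy0 _ kk
    linarith
  -- s undoes p along the backward path
  have sstep : ∀ c, c + 1 < m → s (p^[c+1] j) = p^[c] j := by
    intro c hc
    have hw : p^[c+1] j ≠ 0 := hminm _ hc
    have hout : (∑ i, x (p^[c+1] j) i) = 1 := outdeg_w (c+1) (by omega) hc
    exact bin_unique_of_sum_one (hx _) hout (hs _ hw hout) (arcb c (by omega))
  have sb : ∀ b, b < m → s^[b] (p^[b] j) = j := by
    intro b
    induction b with
    | zero => intro _; simp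
    | succ b ih =>
      intro hb
      rw [Function.iterate_succ_apply, sstep b hb, ih (by omega)]
  -- cross distinctness
  have crossne : ∀ a b, 1 ≤ a → a < k → 1 ≤ b → b < m → s^[a] j ≠ p^[b] j := by
    intro a b ha hak hb hbm heq
    have hq : s^[b + a] j = j := by
      rw [Function.iterate_add_apply, heq, sb b hbm]
    have hq0 : 0 < b + a := by omega
    have hper : s^[0 + (b + a)] j = s^[0] j := by simpa using hq
    have hmod := iter_mod s j 0 (b + a) hq0 hper
    rcases lt_or_ge k (b + a) with h | h
    · have hz : s^[b + a] j = 0 := by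
        rw [show b + a = (b + a - k) + k by omega, Function.iterate_add_apply, hk]
        exact Function.iterate_fixed hs0 _
      exact hj (by rw [← hq]; exact hz)
    · have h0 : s^[k % (b + a)] j = 0 := by
        have h' := hmod k
        simp only [Nat.zero_add] at h'
        rw [← h', hk]
      have hlt : k % (b + a) < b + a := Nat.mod_lt _ hq0
      exact hmink (k % (b + a)) (by omega) h0
  -- distinctness within paths (extended to include the endpoint 0)
  have dfwd := iter_min_distinct s j 0 k hk hmink
  have dbwd := iter_min_distinct p j 0 m hm hminm
  have F2 : ∀ a1 a2, a1 < a2 → a2 ≤ k → s^[a1] j ≠ s^[a2] j := by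
    intro a1 a2 h12 h2k heq
    rcases eq_or_lt_of_le h2k with h | h
    · exact hmink a1 (by omega) (by rw [heq, h, hk])
    · exact dfwd a1 a2 h12 h heq
  have F1 : ∀ b1 b2, b1 < b2 → b2 ≤ m → p^[b1] j ≠ p^[b2] j := by
    intro b1 b2 h12 h2m heq
    rcases eq_or_lt_of_le h2m with h | h
    · exact hminm b1 (by omega) (by rw [heq, h, hm])
    · exact dbwd b1 b2 h12 h heq
  have F3 : ∀ a b, 1 ≤ a → a < k → b ≤ m → s^[a] j ≠ p^[b] j := by
    intro a b ha hak hbm heq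
    rcases Nat.eq_zero_or_pos b with rfl | hb
    · simp only [Function.iterate_zero, id_eq] at heq
      exact F2 0 a (by omega) (by omega) (by simpa using heq.symm)
    rcases eq_or_lt_of_le hbm with h | h
    · exact hmink a hak (by rw [heq, h, hm])
    · exact crossne a b ha hak hb h heq
  -- the cyclic list of nodes
  have hNpos : 0 < m + k := by omega
  set g : Fin (m + k) → Fin (n+1) :=
    fun i => if (i:ℕ) ≤ m then p^[m - (i:ℕ)] j else s^[(i:ℕ) - m] j with hgdef
  have hgp : ∀ (i : Fin (m+k)), (i:ℕ) ≤ m → g i = p^[m - (i:ℕ)] j := by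
    intro i h
    rw [hgdef]
    simp only [if_pos h]
  have hgs : ∀ (i : Fin (m+k)), m ≤ (i:ℕ) → g i = s^[(i:ℕ) - m] j := by
    intro i h
    rcases eq_or_lt_of_le h with h' | h'
    · rw [hgdef]
      simp only [if_pos (le_of_eq h'.symm), ← h', Nat.sub_self, Function.iterate_zero, id_eq]
      split <;> rfl
    · rw [hgdef]
      simp only [if_neg (by omega : ¬ (i:ℕ) ≤ m)]
  have hg0 : g ⟨0, hNpos⟩ = 0 := by
    rw [hgp ⟨0, hNpos⟩ (by simp)]
    simpa using hm
  have hgm : g ⟨m, by omega⟩ = j := by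
    rw [hgp ⟨m, by omega⟩ (by simp)]
    simp
  -- injectivity
  have hinj : Function.Injective g := by
    intro i1 i2 heq
    by_contra hne
    have hne' : (i1:ℕ) ≠ (i2:ℕ) := fun h => hne (Fin.ext h)
    by_cases h1 : (i1:ℕ) ≤ m <;> by_cases h2 : (i2:ℕ) ≤ m
    · rw [hgp i1 h1, hgp i2 h2] at heq
      rcases Nat.lt_or_ge (m - (i1:ℕ)) (m - (i2:ℕ)) with h | h
      · exact F1 _ _ h (by omega) heq
      · exact F1 _ _ (by omega) (by omega) heq.symm
    · rw [hgp i1 h1, hgs i2 (by omega)] at heq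
      exact F3 ((i2:ℕ) - m) (m - (i1:ℕ)) (by omega) (by omega) (by omega) heq.symm
    · rw [hgs i1 (by omega), hgp i2 h2] at heq
      exact F3 ((i1:ℕ) - m) (m - (i2:ℕ)) (by omega) (by omega) (by omega) heq
    · rw [hgs i1 (by omega), hgs i2 (by omega)] at heq
      rcases Nat.lt_or_ge ((i1:ℕ) - m) ((i2:ℕ) - m) with h | h
      · exact F2 _ _ h (by omega) heq
      · exact F2 _ _ (by omega) (by omega) heq.symm
  -- the key cyclic-arc fact
  have key : ∀ (i1 i2 : Fin (m + k)), ((i1:ℕ) + 1) % (m + k) = (i2:ℕ) →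
      x (g i1) (g i2) = 1 := by
    intro i1 i2 h12
    rcases lt_or_ge ((i1:ℕ) + 1) (m + k) with hlt | hge
    · -- i2 = i1 + 1
      rw [Nat.mod_eq_of_lt hlt] at h12
      rcases lt_or_ge (i1:ℕ) m with hc | hc
      · -- backward part
        rw [hgp i1 (by omega), hgp i2 (by omega)]
        have h := arcb (m - (i1:ℕ) - 1) (by omega)
        rw [show m - (i1:ℕ) - 1 + 1 = m - (i1:ℕ) by omega] at h
        rw [show m - (i2:ℕ) = m - (i1:ℕ) - 1 by omega]
        exact h
      · -- forward part
        rw [hgs i1 hc, hgs i2 (by omega)]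
        have h := arcf ((i1:ℕ) - m) (by omega)
        rw [show (i2:ℕ) - m = (i1:ℕ) - m + 1 by omega]
        exact h
    · -- wrap-around: i1 = m + k - 1, i2 = 0
      have he1 : (i1:ℕ) = m + k - 1 := by omega
      have he2 : (i2:ℕ) = 0 := by
        rw [← h12, show (i1:ℕ) + 1 = m + k by omega, Nat.mod_self]
      rw [hgs i1 (by omega)]
      have hg2 : g i2 = 0 := by
        have : i2 = ⟨0, hNpos⟩ := Fin.ext (by simp [he2])
        rw [this]; exact hg0
      rw [hg2, show (0 : Fin (n+1)) = s^[k] j from hk.symm,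
        show (i1:ℕ) - m = k - 1 by omega, show k = (k-1) + 1 by omega]
      exact arcf (k - 1) (by omega)
  -- assemble
  refine ⟨List.ofFn g, ?_, (List.nodup_ofFn).mpr hinj, ?_, ?_, ?_⟩
  · intro h
    rw [List.ofFn_eq_nil_iff] at h
    omega
  · -- arcs
    intro a ha
    unfold cycleArcs at ha
    obtain ⟨idx, hidx, hEq⟩ := List.mem_iff_getElem.mp ha
    rw [List.getElem_zip] at hEq
    rw [← hEq]
    simp only [List.getElem_rotate, List.length_ofFn, List.getElem_ofFn]
    exact key _ _ rfl
  · exact List.mem_ofFn.mpr ⟨⟨0, hNpos⟩, hg0⟩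
  · exact List.mem_ofFn.mpr ⟨⟨m, by omega⟩, hgm⟩
end

section
/- Let x : V × V → {0,1} and y : C^U × U → {0,1} satisfy the degree constraints and the flow conservation constraints, and suppose the digraph with arc set {(i,j) : x_{ij} = 1} contains a directed cycle whose node set K ⊆ C does not include the depot 0. Then the connectivity constraint for the set S = V \ K (which contains 0) is violated; in fact Σ_{i∈S, j∉S} x_{ij} + Σ_{j∉S} Σ_{k∈U} y_j^k = 0. -/
open Finset

lemma pred_mem_cycleArcs {α : Type*} (l : List α) (hl : l ≠ []) {j : α} (hj : j ∈ l) :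
    ∃ i ∈ l, (i, j) ∈ cycleArcs l := by
  obtain ⟨m, hm⟩ := List.get_of_mem hj
  have hlen : 0 < l.length := List.length_pos_iff.mpr hl
  set k := ((m : ℕ) + l.length - 1) % l.length with hk
  have hk_lt : k < l.length := Nat.mod_lt _ hlen
  have harith : (k + 1) % l.length = (m : ℕ) := by
    rw [hk, Nat.mod_add_mod]
    have h1 : (m : ℕ) + l.length - 1 + 1 = (m : ℕ) + l.length := by omega
    rw [h1, Nat.add_mod_right, Nat.mod_eq_of_lt m.isLt]
  have hzlen : k < (l.zip (l.rotate 1)).length := by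
    simpa [List.length_zip, List.length_rotate] using hk_lt
  refine ⟨l.get ⟨k, hk_lt⟩, List.get_mem l ⟨k, hk_lt⟩, ?_⟩
  have hmem := List.get_mem (l.zip (l.rotate 1)) ⟨k, hzlen⟩
  have hget : (l.zip (l.rotate 1)).get ⟨k, hzlen⟩ =
      (l.get ⟨k, hk_lt⟩, (l.rotate 1).get ⟨k, by simpa [List.length_rotate] using hk_lt⟩) := by
    simp [List.getElem_zip]
  have hrot : (l.rotate 1).get ⟨k, by simpa [List.length_rotate] using hk_lt⟩ = j := by
    rw [List.get_rotate, ← hm]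
    congr 1
    exact Fin.ext harith
  rw [hget, hrot] at hmem
  exact hmem

/-- if binary `x`, `y` satisfy the degree and flow conservation constraints
and the digraph `{(i,j) : x i j = 1}` contains a directed cycle (with node list `l`)
avoiding the depot `0`, then the connectivity constraint for `S = V \ K` (where
`K = l.toFinset`) is violated; in fact its left-hand side equals `0`. -/
theorem subtour_violates_connectivity
    {n : ℕ} {U : Type*} [Fintype U]
    (CU : Finset (Fin (n + 1))) (hCU : (0 : Fin (n + 1)) ∉ CU)
    (x : Fin (n + 1) → Fin (n + 1) → ℝ) (y : Fin (n + 1) → U → ℝ)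
    (hx : ∀ i j, x i j = 0 ∨ x i j = 1)
    (hy : ∀ i k, y i k = 0 ∨ y i k = 1)
    (hyCU : ∀ i, i ∉ CU → ∀ k, y i k = 0)
    (hdegIn : ∀ j : Fin (n + 1), j ≠ 0 → (∑ i, x i j) + (∑ k, y j k) = 1)
    (hdegOut : ∀ j : Fin (n + 1), j ≠ 0 → (∑ i, x j i) + (∑ k, y j k) = 1)
    (hflow : ∀ i : Fin (n + 1), (∑ j, x j i) = (∑ j, x i j))
    (l : List (Fin (n + 1))) (hl : l ≠ []) (hlnd : l.Nodup)
    (h0l : (0 : Fin (n + 1)) ∉ l)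
    (harcs : ∀ a ∈ cycleArcs l, x a.1 a.2 = 1) :
    (0 : Fin (n + 1)) ∈ l.toFinsetᶜ ∧ l.toFinsetᶜ ≠ Finset.univ ∧
    ¬ (1 ≤ (∑ i ∈ l.toFinsetᶜ, ∑ j ∈ (l.toFinsetᶜ)ᶜ, x i j) +
        (∑ j ∈ (l.toFinsetᶜ)ᶜ, ∑ k, y j k)) ∧
    (∑ i ∈ l.toFinsetᶜ, ∑ j ∈ (l.toFinsetᶜ)ᶜ, x i j) +
        (∑ j ∈ (l.toFinsetᶜ)ᶜ, ∑ k, y j k) = 0 := by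
  have hxnn : ∀ i j, 0 ≤ x i j := fun i j => by rcases hx i j with h | h <;> simp [h]
  have hynn : ∀ i k, 0 ≤ y i k := fun i k => by rcases hy i k with h | h <;> simp [h]
  -- key fact: for j in the cycle, incoming x from outside is 0 and y is 0
  have key : ∀ j ∈ l.toFinset, (∀ i, i ∉ l.toFinset → x i j = 0) ∧ (∀ k, y j k = 0) := by
    intro j hj
    rw [List.mem_toFinset] at hj
    obtain ⟨i₀, hi₀l, harc⟩ := pred_mem_cycleArcs l hl hj
    have hx1 : x i₀ j = 1 := harcs _ harc
    have hj0 : j ≠ 0 := fun h => h0l (h ▸ hj)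
    have hsum := hdegIn j hj0
    rw [← Finset.add_sum_erase _ (fun i => x i j) (Finset.mem_univ i₀), hx1] at hsum
    have hzero : (∑ i ∈ Finset.univ.erase i₀, x i j) + (∑ k, y j k) = 0 := by linarith
    have hxz : ∀ i ∈ Finset.univ.erase i₀, x i j = 0 := by
      have h1 : (∑ i ∈ Finset.univ.erase i₀, x i j) = 0 := by
        have := Finset.sum_nonneg (fun k (_ : k ∈ (Finset.univ : Finset U)) => hynn j k)
        have := Finset.sum_nonneg (fun i (_ : i ∈ Finset.univ.erase i₀) => hxnn i j)
        linarith
      exact fun i hi => le_antisymm (by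
        have := Finset.sum_le_sum_of_subset_of_nonneg (Finset.singleton_subset_iff.mpr hi)
          (fun a _ _ => hxnn a j)
        simpa [h1] using this) (hxnn i j)
    have hyz : ∀ k, y j k = 0 := by
      have h2 : (∑ k, y j k) = 0 := by
        have := Finset.sum_nonneg (fun i (_ : i ∈ Finset.univ.erase i₀) => hxnn i j)
        have := Finset.sum_nonneg (fun k (_ : k ∈ (Finset.univ : Finset U)) => hynn j k)
        linarith
      intro k
      exact le_antisymm (by
        have := Finset.sum_le_sum_of_subset_of_nonneg
          (Finset.singleton_subset_iff.mpr (Finset.mem_univ k)) (fun a _ _ => hynn j a)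
        simpa [h2] using this) (hynn j k)
    refine ⟨fun i hi => ?_, hyz⟩
    have : i ≠ i₀ := fun h => hi (h ▸ List.mem_toFinset.mpr hi₀l)
    exact hxz i (Finset.mem_erase.mpr ⟨this, Finset.mem_univ i⟩)
  have hK : (l.toFinsetᶜ)ᶜ = l.toFinset := compl_compl _
  have hS1 : (∑ i ∈ l.toFinsetᶜ, ∑ j ∈ (l.toFinsetᶜ)ᶜ, x i j) = 0 := by
    rw [hK]
    refine Finset.sum_eq_zero fun i hi => Finset.sum_eq_zero fun j hj => ?_
    exact (key j hj).1 i (Finset.mem_compl.mp hi)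
  have hS2 : (∑ j ∈ (l.toFinsetᶜ)ᶜ, ∑ k, y j k) = 0 := by
    rw [hK]
    exact Finset.sum_eq_zero fun j hj => Finset.sum_eq_zero fun k _ => (key j hj).2 k
  have h0mem : (0 : Fin (n + 1)) ∈ l.toFinsetᶜ :=
    Finset.mem_compl.mpr (fun h => h0l (List.mem_toFinset.mp h))
  refine ⟨h0mem, ?_, ?_, ?_⟩
  · intro h
    obtain ⟨a, ha⟩ := List.exists_mem_of_ne_nil l hl
    have : a ∈ l.toFinsetᶜ := h ▸ Finset.mem_univ a
    exact Finset.mem_compl.mp this (List.mem_toFinset.mpr ha)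
  · rw [hS1, hS2]; norm_num
  · rw [hS1, hS2]; ring
end

section
/- Let s = (s_1, …, s_n) be an ordering of all customers in C, and let (D, a, truck cycle) be a feasible PDSTSP solution whose truck cycle visits its customers in increasing position with respect to s. If the truck cycle contains the arc (s_i, s_j) with i < j, then every customer s_k with i < k < j belongs to D, i.e., is served by a drone. Equivalently, the inequalities x_{s_i s_j} ≤ Σ_{m∈U} y^m_{s_k} for all i < k < j are satisfied by the incidence vector (x,y) of every such solution. -/
open Finset

variable {n : ℕ} {U : Type*} [Fintype U]

variable {P : PDSTSP n U}

/-- `s` is an ordering (bijective listing) of all the customers. -/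
def IsOrdering {n : ℕ} (s : Fin n → Fin (n + 1)) : Prop :=
  (∀ i, s i ≠ 0) ∧ Function.Injective s ∧ ∀ v : Fin (n + 1), v ≠ 0 → ∃ i, s i = v

/-- The truck cycle of `sol` visits its customers in increasing position w.r.t. `s`. -/
def OrderRespecting (s : Fin n → Fin (n + 1)) (sol : PDSSol P) : Prop :=
  ∃ idxs : List (Fin n), idxs.Pairwise (· < ·) ∧ sol.tour = idxs.map s

/-- `FVal P s` is the value `F(s)`: the minimum cost over feasible solutions whose truck
cycle respects the order given by `s`. -/
noncomputable def FVal [DecidableEq U] (P : PDSTSP n U) (s : Fin n → Fin (n + 1)) : ℝ :=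
  sInf {c : ℝ | ∃ sol : PDSSol P, OrderRespecting s sol ∧ sol.cost = c}

/-- if the truck cycle of a feasible solution visits its customers in
increasing position w.r.t. the ordering `s` and contains the arc `(s i, s j)` with
`i < j`, then every customer `s k` with `i < k < j` is served by a drone; equivalently,
the incidence vector satisfies `x (s i) (s j) ≤ ∑ m, y (s k) m` for all `i < k < j`. -/
theorem arc_skips_only_drone_customers
    {n : ℕ} {U : Type*} [Fintype U] [DecidableEq U] (P : PDSTSP n U)
    (s : Fin n → Fin (n + 1)) (hs : IsOrdering s)
    (sol : PDSSol P) (hresp : OrderRespecting s sol) :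
    ∀ i j k : Fin n, i < k → k < j →
      ((s i, s j) ∈ tourArcs sol.tour → sol.assign (s k) ≠ none) ∧
      incX sol (s i) (s j) ≤ ∑ m : U, incY sol (s k) m := by
  obtain ⟨hne0, hinj, hsurj⟩ := hs
  obtain ⟨idxs, hsort, htour⟩ := hresp
  intro i j k hik hkj
  have main : (s i, s j) ∈ tourArcs sol.tour → sol.assign (s k) ≠ none := by
    intro harc
    unfold tourArcs at harc
    split at harc
    · simp at harc
    · -- harc : (s i, s j) ∈ cycleArcs (0 :: sol.tour)
      unfold cycleArcs at harc
      set l : List (Fin (n + 1)) := (0 : Fin (n + 1)) :: sol.tour with hl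
      obtain ⟨m, hm, hget⟩ := List.mem_iff_getElem.mp harc
      have hmlen : m < l.length := by
        have := hm
        simpa [List.length_zip, List.length_rotate] using this
      have h1 : l[m]'hmlen = s i := by
        have := hget
        rw [List.getElem_zip] at this
        exact congrArg Prod.fst this
      have h2len : (m + 1) % l.length < l.length :=
        Nat.mod_lt _ (by simp [hl])
      have h2 : l[(m + 1) % l.length]'h2len = s j := by
        have := hget
        rw [List.getElem_zip, List.getElem_rotate] at this
        exact congrArg Prod.snd this
      -- m ≠ 0
      rcases m with _ | m'
      · exfalso; exact hne0 i (by simpa [hl] using h1.symm)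
      -- l[m'+1] = tour[m']
      have hm' : m' < idxs.length := by
        have : m' + 1 < sol.tour.length + 1 := by simpa [hl] using hmlen
        simpa [htour] using this
      have hii : idxs[m'] = i := by
        apply hinj
        have : sol.tour[m']'(by simp [htour, hm']) = s i := by simpa [hl] using h1
        simpa [htour, List.getElem_map] using this
      -- second coordinate
      have llen : l.length = idxs.length + 1 := by simp [hl, htour]
      have hne : (m' + 1 + 1) % l.length ≠ 0 := by
        intro hz
        have hz' : (m' + 1 + 1) % (sol.tour.length + 1) = 0 := by simpa [hl] using hz
        have hz0 : l[(m' + 1 + 1) % l.length]'h2len = (0 : Fin (n + 1)) := by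
          simp [hl, hz']
        rw [h2] at hz0
        exact hne0 j hz0
      have hm2eq : (m' + 1 + 1) % l.length = m' + 2 := by
        rcases Nat.lt_or_ge (m' + 2) l.length with h | h
        · exact Nat.mod_eq_of_lt h
        · exfalso; apply hne
          have heq : m' + 2 = l.length := by omega
          rw [← heq]; simp
      have hm2 : m' + 2 < l.length := by rw [hm2eq] at h2len; exact h2len
      have hm'2 : m' + 1 < idxs.length := by omega
      have hjj : idxs[m' + 1] = j := by
        apply hinj
        simp only [hm2eq] at h2
        have : sol.tour[m' + 1]'(by simp [htour]; omega) = s j := by simpa [hl] using h2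
        simpa [htour, List.getElem_map] using this
      -- now if assign (s k) = none, s k ∈ tour, contradiction
      intro hnone
      have hmem : s k ∈ sol.tour := (sol.tour_mem (s k)).mpr ⟨hne0 k, hnone⟩
      rw [htour] at hmem
      obtain ⟨k', hk'mem, hk'⟩ := List.mem_map.mp hmem
      have hkk : k' = k := hinj hk'
      subst hkk
      obtain ⟨t, ht, hget'⟩ := List.mem_iff_getElem.mp hk'mem
      have hmono := hsort.sortedLT.strictMono_get
      have h1' : m' < t := by
        have : idxs.get ⟨m', hm'⟩ < idxs.get ⟨t, ht⟩ := by
          simpa [List.get_eq_getElem, hii, hget'] using hik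
        exact hmono.lt_iff_lt.mp this
      have h2' : t < m' + 1 := by
        have : idxs.get ⟨t, ht⟩ < idxs.get ⟨m' + 1, hm'2⟩ := by
          simpa [List.get_eq_getElem, hjj, hget'] using hkj
        exact hmono.lt_iff_lt.mp this
      omega
  refine ⟨main, ?_⟩
  by_cases hx : (s i, s j) ∈ tourArcs sol.tour
  · obtain ⟨m, hm⟩ := Option.ne_none_iff_exists.mp (main hx)
    have hy : incY sol (s k) m = 1 := by simp [incY, hm.symm]
    have hx1 : incX sol (s i) (s j) = 1 := by simp [incX, hx]
    rw [hx1, ← hy]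
    exact Finset.single_le_sum (fun u _ => by simp only [incY]; split <;> norm_num)
      (Finset.mem_univ m)
  · have hx0 : incX sol (s i) (s j) = 0 := by simp [incX, hx]
    rw [hx0]
    exact Finset.sum_nonneg fun u _ => by simp only [incY]; split <;> norm_num
end

section
/- Let s = (s_1, …, s_p) be a sequence of distinct customers and let j be a customer not appearing in s. Let (D, a, truck cycle) be a feasible PDSTSP solution whose truck cycle visits a subset of {s_1,…,s_p} ∪ {j}, visiting the s-customers it serves in increasing position with respect to s, and let x be the incidence vector of the truck cycle. Then for every i ∈ {2,…,p}: Σ_{1 ≤ k < i} x_{j s_k} ≤ 1 − x_{s_i j}, and for every i ∈ {1,…,p−1}: x_{j s_i} ≤ 1 − Σ_{i < k ≤ p} x_{s_k j}. In other words, if the truck travels directly from s_i to j then it does not travel directly from j to any s_k with k < i, and if it travels directly from j to s_i then it does not travel directly from any s_k with k > i to j. -/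
open Finset

variable {n : ℕ} {U : Type*} [Fintype U]

variable {P : PDSTSP n U}

lemma mem_zip_iff_get?' {α β : Type*} {l1 : List α} {l2 : List β} {a : α} {b : β} :
    (a, b) ∈ l1.zip l2 ↔ ∃ m : ℕ, l1[m]? = some a ∧ l2[m]? = some b := by
  constructor
  · intro h
    rcases List.mem_iff_getElem?.1 h with ⟨m, hm⟩
    rw [List.getElem?_zip_eq_some] at hm
    exact ⟨m, hm.1, hm.2⟩
  · rintro ⟨m, h1, h2⟩
    exact List.mem_iff_getElem?.2 ⟨m, List.getElem?_zip_eq_some.2 ⟨h1, h2⟩⟩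

lemma arc_consec' {t : List (Fin (n + 1))}
    {a b : Fin (n + 1)} (ha : a ≠ 0) (hb : b ≠ 0)
    (h : (a, b) ∈ tourArcs t) :
    ∃ m, t[m]? = some a ∧ t[m + 1]? = some b := by
  by_cases ht : t = []
  · simp [tourArcs, ht] at h
  rw [tourArcs, if_neg ht] at h
  rw [cycleArcs, List.rotate_cons_succ, List.rotate_zero] at h
  rcases mem_zip_iff_get?'.1 h with ⟨m, h1, h2⟩
  cases m with
  | zero => simp at h1; exact absurd h1.symm ha
  | succ m =>
    rw [List.getElem?_cons_succ] at h1
    refine ⟨m, h1, ?_⟩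
    have hmlt : m < t.length := (List.getElem?_eq_some_iff.1 h1).1
    by_cases hm1 : m + 1 < t.length
    · rwa [List.getElem?_append_left hm1] at h2
    · have : m + 1 = t.length := by omega
      rw [List.getElem?_append_right (by omega), this] at h2
      simp at h2
      exact absurd h2.symm hb

lemma order_lemma' {p : ℕ} {s : Fin p → Fin (n + 1)} (hsInj : Function.Injective s)
    {j : Fin (n + 1)} (hjs : ∀ i, s i ≠ j) :
    ∀ (t : List (Fin (n + 1))) (idxs : List (Fin p)), idxs.Pairwise (· < ·) →
      t.filter (fun v => decide (v ≠ j)) = idxs.map s →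
      ∀ (m1 m2 : ℕ) (i k : Fin p), m1 < m2 →
        t[m1]? = some (s i) → t[m2]? = some (s k) → i < k := by
  intro t
  induction t with
  | nil => intro idxs _ _ m1 m2 i k _ h1 _; simp at h1
  | cons a t ih =>
    intro idxs hsort hfil m1 m2 i k hlt h1 h2
    by_cases haj : a = j
    · rw [List.filter_cons_of_neg (by simp [haj])] at hfil
      cases m1 with
      | zero =>
        rw [List.getElem?_cons_zero] at h1
        exact absurd (Option.some.inj h1).symm (haj ▸ hjs i)
      | succ m1' =>
        obtain ⟨m2', rfl⟩ : ∃ m2', m2 = m2' + 1 := ⟨m2 - 1, by omega⟩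
        exact ih idxs hsort hfil m1' m2' i k (by omega)
          (by rwa [List.getElem?_cons_succ] at h1) (by rwa [List.getElem?_cons_succ] at h2)
    · rw [List.filter_cons_of_pos (by simp [haj])] at hfil
      cases idxs with
      | nil => simp at hfil
      | cons i0 idxs' =>
        rw [List.map_cons] at hfil
        have ha : a = s i0 := (List.cons.inj hfil).1
        have hfil' : t.filter (fun v => decide (v ≠ j)) = idxs'.map s :=
          (List.cons.inj hfil).2
        cases m1 with
        | zero =>
          rw [List.getElem?_cons_zero] at h1
          have hi : i = i0 := hsInj (by rw [← (Option.some.inj h1), ha])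
          obtain ⟨m2', rfl⟩ : ∃ m2', m2 = m2' + 1 := ⟨m2 - 1, by omega⟩
          rw [List.getElem?_cons_succ] at h2
          have hmem : s k ∈ t.filter (fun v => decide (v ≠ j)) :=
            List.mem_filter.2 ⟨List.mem_of_getElem? h2, by simp [hjs k]⟩
          rw [hfil'] at hmem
          obtain ⟨b, hb, hbk⟩ := List.mem_map.1 hmem
          have hbk' : b = k := hsInj hbk
          subst hbk'
          exact hi ▸ List.rel_of_pairwise_cons hsort hb
        | succ m1' =>
          obtain ⟨m2', rfl⟩ : ∃ m2', m2 = m2' + 1 := ⟨m2 - 1, by omega⟩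
          exact ih idxs' hsort.of_cons hfil' m1' m2' i k (by omega)
            (by rwa [List.getElem?_cons_succ] at h1) (by rwa [List.getElem?_cons_succ] at h2)

/-- let `s` be a sequence of `p` distinct customers and `j` a customer not
in `s`. If the truck cycle of a feasible solution only visits nodes of `s` and possibly
`j`, visiting the `s`-customers in increasing position w.r.t. `s`, then its incidence
vector satisfies `∑_{k < i} x j (s k) ≤ 1 - x (s i) j` and
`x j (s i) ≤ 1 - ∑_{k > i} x (s k) j` for every `i`. -/
theorem insertion_order_inequalities
    {n : ℕ} {U : Type*} [Fintype U] [DecidableEq U] (P : PDSTSP n U)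
    {p : ℕ} (s : Fin p → Fin (n + 1))
    (hs0 : ∀ i, s i ≠ 0) (hsInj : Function.Injective s)
    (j : Fin (n + 1)) (hj0 : j ≠ 0) (hjs : ∀ i, s i ≠ j)
    (sol : PDSSol P)
    (hsub : ∀ v ∈ sol.tour, v = j ∨ ∃ i, s i = v)
    (hresp : ∃ idxs : List (Fin p), idxs.Pairwise (· < ·) ∧
        sol.tour.filter (fun v => decide (v ≠ j)) = idxs.map s) :
    (∀ i : Fin p,
        (∑ k ∈ Finset.univ.filter (fun k => k < i), incX sol j (s k)) ≤
          1 - incX sol (s i) j) ∧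
    (∀ i : Fin p,
        incX sol j (s i) ≤
          1 - ∑ k ∈ Finset.univ.filter (fun k => i < k), incX sol (s k) j) := by
    classical
  obtain ⟨idxs, hsort, hfil⟩ := hresp
  set t := sol.tour with ht
  have hnd : t.Nodup := sol.tour_nodup
  have huniq : ∀ q1 q2 : ℕ, t[q1]? = some j → t[q2]? = some j → q1 = q2 := by
    intro q1 q2 h1 h2
    have e1 : q1 < t.length := (List.getElem?_eq_some_iff.1 h1).1
    apply (List.getElem?_inj e1 hnd).1
    rw [h1, h2]
  have horder := order_lemma' hsInj hjs t idxs hsort hfil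
  have hout : ∀ b1 b2 : Fin (n + 1), b1 ≠ 0 → b2 ≠ 0 →
      (j, b1) ∈ tourArcs t → (j, b2) ∈ tourArcs t → b1 = b2 := by
    intro b1 b2 hb1 hb2 h1 h2
    obtain ⟨m1, hm1, hm1'⟩ := arc_consec' hj0 hb1 h1
    obtain ⟨m2, hm2, hm2'⟩ := arc_consec' hj0 hb2 h2
    have : m1 = m2 := huniq _ _ hm1 hm2
    subst this
    rw [hm1'] at hm2'
    exact Option.some.inj hm2'
  have hin : ∀ a1 a2 : Fin (n + 1), a1 ≠ 0 → a2 ≠ 0 →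
      (a1, j) ∈ tourArcs t → (a2, j) ∈ tourArcs t → a1 = a2 := by
    intro a1 a2 ha1 ha2 h1 h2
    obtain ⟨m1, hm1, hm1'⟩ := arc_consec' ha1 hj0 h1
    obtain ⟨m2, hm2, hm2'⟩ := arc_consec' ha2 hj0 h2
    have : m1 + 1 = m2 + 1 := huniq _ _ hm1' hm2'
    have hm : m1 = m2 := by omega
    subst hm
    rw [hm1] at hm2
    exact Option.some.inj hm2
  constructor
  · intro i
    by_cases hx : (s i, j) ∈ tourArcs t
    · have hz : ∀ k ∈ Finset.univ.filter (fun k => k < i), incX sol j (s k) = 0 := by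
        intro k hk
        have hk' : k < i := (Finset.mem_filter.1 hk).2
        rw [incX, if_neg]
        intro hmem
        obtain ⟨m, hm1, hm2⟩ := arc_consec' (hs0 i) hj0 hx
        obtain ⟨q, hq1, hq2⟩ := arc_consec' hj0 (hs0 k) hmem
        have hq : q = m + 1 := huniq _ _ hq1 hm2
        subst hq
        exact absurd (horder m (m + 1 + 1) i k (by omega) hm1 hq2) (lt_asymm hk')
      rw [Finset.sum_eq_zero hz, incX, if_pos hx]
      norm_num
    · have h1 : incX sol (s i) j = 0 := by rw [incX, if_neg hx]
      rw [h1, sub_zero]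
      by_cases he : ∃ k0 ∈ Finset.univ.filter (fun k => k < i), (j, s k0) ∈ tourArcs t
      · obtain ⟨k0, hk0, hk0arc⟩ := he
        rw [Finset.sum_eq_single_of_mem k0 hk0 (fun b hb hbne => by
          rw [incX, if_neg]
          intro hm
          exact hbne (hsInj (hout _ _ (hs0 b) (hs0 k0) hm hk0arc)))]
        rw [incX]
        split <;> norm_num
      · push_neg at he
        rw [Finset.sum_eq_zero (fun k hk => by rw [incX, if_neg (he k hk)])]
        norm_num
  · intro i
    by_cases hx : (j, s i) ∈ tourArcs t
    · have hz : ∀ k ∈ Finset.univ.filter (fun k => i < k), incX sol (s k) j = 0 := by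
        intro k hk
        have hk' : i < k := (Finset.mem_filter.1 hk).2
        rw [incX, if_neg]
        intro hmem
        obtain ⟨m, hm1, hm2⟩ := arc_consec' hj0 (hs0 i) hx
        obtain ⟨q, hq1, hq2⟩ := arc_consec' (hs0 k) hj0 hmem
        have hq : q + 1 = m := huniq _ _ hq2 hm1
        have hq' : m + 1 = q + 1 + 1 := by omega
        rw [hq'] at hm2
        exact absurd (horder q (q + 1 + 1) k i (by omega) hq1 hm2) (lt_asymm hk')
      rw [Finset.sum_eq_zero hz, incX, if_pos hx]
      norm_num
    · have h1 : incX sol j (s i) = 0 := by rw [incX, if_neg hx]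
      rw [h1]
      rw [sub_nonneg]
      by_cases he : ∃ k0 ∈ Finset.univ.filter (fun k => i < k), (s k0, j) ∈ tourArcs t
      · obtain ⟨k0, hk0, hk0arc⟩ := he
        rw [Finset.sum_eq_single_of_mem k0 hk0 (fun b hb hbne => by
          rw [incX, if_neg]
          intro hm
          exact hbne (hsInj (hin _ _ (hs0 b) (hs0 k0) hm hk0arc)))]
        rw [incX]
        split <;> norm_num
      · push_neg at he
        rw [Finset.sum_eq_zero (fun k hk => by rw [incX, if_neg (he k hk)])]
        norm_num
end

section
/- Suppose C^U = C (every customer is drone-eligible), t^T is nonnegative and satisfies the triangle inequality, and t^T_{0j} + t^T_{j0} ≥ Σ_{i∈C} t^U_i for every customer j. Then OPT equals the optimal makespan of the identical parallel machine scheduling problem P||C_max with job set C, processing times t^U_i, and |U| machines, i.e., OPT = min over assignments a : C → U of max_{k∈U} Σ_{i : a(i)=k} t^U_i, and an optimal PDSTSP solution serves all customers by drones. -/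
open Finset

variable {n : ℕ} {U : Type*} [Fintype U]

variable {P : PDSTSP n U}

section Aux

lemma pathSum_ge (P : PDSTSP n U) (htri : ∀ i h j : Fin (n + 1), P.tT i j ≤ P.tT i h + P.tT h j) :
    ∀ (l : List (Fin (n + 1))) (a e : Fin (n + 1)),
      P.tT a e ≤ (((a :: l).zip (l ++ [e])).map fun p => P.tT p.1 p.2).sum := by
  intro l
  induction l with
  | nil => intro a e; simp
  | cons b l ih =>
    intro a e
    simp only [List.cons_append, List.zip_cons_cons, List.map_cons, List.sum_cons]
    calc P.tT a e ≤ P.tT a b + P.tT b e := htri a b e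
      _ ≤ _ := by have := ih b e; linarith

/-- The all-drone solution induced by an assignment `a`. -/
def allDroneSol (P : PDSTSP n U) (hall : P.CU = ({0}ᶜ : Finset (Fin (n + 1))))
    (a : Fin (n + 1) → U) : PDSSol P where
  assign i := if i = 0 then none else some (a i)
  tour := []
  assign_mem := by
    intro i hi
    rw [hall, Finset.mem_compl, Finset.mem_singleton]
    intro h
    simp [h] at hi
  tour_nodup := List.nodup_nil
  tour_mem := by
    intro v
    constructor
    · intro h; simp at h
    · rintro ⟨h1, h2⟩; simp [h1] at h2

lemma allDrone_load [DecidableEq U] (P : PDSTSP n U)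
    (hall : P.CU = ({0}ᶜ : Finset (Fin (n + 1)))) (a : Fin (n + 1) → U) (k : U) :
    (allDroneSol P hall a).droneLoad k
      = ∑ i ∈ ({0}ᶜ : Finset (Fin (n + 1))).filter (fun i => a i = k), P.tU i := by
  rw [Finset.sum_filter]
  unfold PDSSol.droneLoad allDroneSol
  rw [← Finset.sum_subset (Finset.subset_univ ({0}ᶜ : Finset (Fin (n + 1))))]
  · apply Finset.sum_congr rfl
    intro i hi
    rw [Finset.mem_compl, Finset.mem_singleton] at hi
    simp [hi]
  · intro i _ hi
    rw [Finset.mem_compl, Finset.mem_singleton, not_not] at hi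
    simp [hi]

end Aux

/-- if every customer is drone-eligible, `tT` satisfies the triangle
inequality, and every back-and-forth truck trip to a customer takes at least the total
drone service time, then `OPT` equals the optimal makespan of the identical parallel
machine scheduling problem `P||C_max` with jobs `C`, processing times `tU` and machines
`U`, and an optimal PDSTSP solution serves all customers by drones. -/
theorem pdstsp_reduces_to_parallel_machine_scheduling
    {n : ℕ} {U : Type*} [Fintype U] [DecidableEq U] [Nonempty U] (P : PDSTSP n U)
    (hall : P.CU = ({0}ᶜ : Finset (Fin (n + 1))))
    (htri : ∀ i h j : Fin (n + 1), P.tT i j ≤ P.tT i h + P.tT h j)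
    (hlong : ∀ j : Fin (n + 1), j ≠ 0 →
        (∑ i ∈ ({0}ᶜ : Finset (Fin (n + 1))), P.tU i) ≤ P.tT 0 j + P.tT j 0) :
    OPT P = sInf {m : ℝ | ∃ a : Fin (n + 1) → U,
        m = ⨆ k : U, ∑ i ∈ ({0}ᶜ : Finset (Fin (n + 1))).filter (fun i => a i = k),
          P.tU i} ∧
    ∃ sol : PDSSol P, (∀ i : Fin (n + 1), i ≠ 0 → sol.assign i ≠ none) ∧
      sol.cost = OPT P := by
  classical
  obtain ⟨k₀⟩ := ‹Nonempty U›
  set T : ℝ := ∑ i ∈ ({0}ᶜ : Finset (Fin (n + 1))), P.tU i with hT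
  set f : (Fin (n + 1) → U) → ℝ := fun a =>
    ⨆ k : U, ∑ i ∈ ({0}ᶜ : Finset (Fin (n + 1))).filter (fun i => a i = k), P.tU i with hfdef
  set S : Set ℝ := {m : ℝ | ∃ a : Fin (n + 1) → U,
      m = ⨆ k : U, ∑ i ∈ ({0}ᶜ : Finset (Fin (n + 1))).filter (fun i => a i = k), P.tU i}
    with hSdef
  have hSrange : S = Set.range f := by
    ext m; simp only [hSdef, Set.mem_setOf_eq, Set.mem_range, hfdef]
    exact exists_congr fun a => eq_comm
  have hterm_nonneg : ∀ (a : Fin (n + 1) → U) (k : U),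
      (0:ℝ) ≤ ∑ i ∈ ({0}ᶜ : Finset (Fin (n + 1))).filter (fun i => a i = k), P.tU i :=
    fun a k => Finset.sum_nonneg fun i _ => P.tU_nonneg i
  have hf_nonneg : ∀ a, 0 ≤ f a := by
    intro a
    show (0:ℝ) ≤ ⨆ k : U, ∑ i ∈ ({0}ᶜ : Finset (Fin (n + 1))).filter (fun i => a i = k), P.tU i
    exact le_trans (hterm_nonneg a k₀)
      (le_ciSup (f := fun k : U => ∑ i ∈ ({0}ᶜ : Finset (Fin (n + 1))).filter
        (fun i => a i = k), P.tU i) (Set.Finite.bddAbove (Set.finite_range _)) k₀)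
  have hSne : S.Nonempty := ⟨f (fun _ => k₀), hSrange ▸ ⟨fun _ => k₀, rfl⟩⟩
  have hSbdd : BddBelow S := by
    refine ⟨0, ?_⟩
    intro m hm
    rw [hSrange] at hm
    obtain ⟨a, rfl⟩ := hm
    exact hf_nonneg a
  -- cost of all-drone solution equals makespan
  have hcost : ∀ a : Fin (n + 1) → U, (allDroneSol P hall a).cost = f a := by
    intro a
    have hsup : (⨆ k : U, (allDroneSol P hall a).droneLoad k) = f a := by
      rw [hfdef]
      exact iSup_congr (allDrone_load P hall a)
    have htl : (allDroneSol P hall a).truckLen = 0 := by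
      simp [PDSSol.truckLen, allDroneSol, tourArcs]
    rw [PDSSol.cost, htl, hsup, max_eq_right (hf_nonneg a)]
  -- makespan of constant assignment equals T
  have hconst : f (fun _ => k₀) = T := by
    rw [hfdef]
    apply le_antisymm
    · apply ciSup_le
      intro k
      apply Finset.sum_le_sum_of_subset_of_nonneg (Finset.filter_subset _ _)
      intro i _ _; exact P.tU_nonneg i
    · refine le_trans ?_ (le_ciSup (Set.Finite.bddAbove (Set.finite_range _)) k₀)
      simp [hT]
  have hTnn : 0 ≤ T := Finset.sum_nonneg fun i _ => P.tU_nonneg i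
  -- every solution has cost ≥ sInf S
  have hlb : ∀ sol : PDSSol P, sInf S ≤ sol.cost := by
    intro sol
    have hassign0 : sol.assign 0 = none := by
      by_contra h
      have := sol.assign_mem 0 h
      rw [hall] at this
      simp at this
    by_cases htour : sol.tour = []
    · -- all customers served by drones
      have hne : ∀ i : Fin (n + 1), i ≠ 0 → sol.assign i ≠ none := by
        intro i hi hnone
        have : i ∈ sol.tour := (sol.tour_mem i).2 ⟨hi, hnone⟩
        rw [htour] at this; simp at this
      set a : Fin (n + 1) → U := fun i => (sol.assign i).getD k₀ with ha
      have hload : ∀ k, sol.droneLoad k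
          = ∑ i ∈ ({0}ᶜ : Finset (Fin (n + 1))).filter (fun i => a i = k), P.tU i := by
        intro k
        rw [Finset.sum_filter, PDSSol.droneLoad,
          ← Finset.sum_subset (Finset.subset_univ ({0}ᶜ : Finset (Fin (n + 1))))]
        · apply Finset.sum_congr rfl
          intro i hi
          rw [Finset.mem_compl, Finset.mem_singleton] at hi
          obtain ⟨u, hu⟩ := Option.ne_none_iff_exists'.1 (hne i hi)
          simp [ha, hu]
        · intro i _ hi
          rw [Finset.mem_compl, Finset.mem_singleton, not_not] at hi
          subst hi
          simp [hassign0]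
      have : sInf S ≤ f a := csInf_le hSbdd (hSrange ▸ ⟨a, rfl⟩)
      refine le_trans this (le_trans ?_ (le_max_right _ _))
      show (⨆ k : U, ∑ i ∈ ({0}ᶜ : Finset (Fin (n + 1))).filter (fun i => a i = k), P.tU i)
        ≤ ⨆ k : U, sol.droneLoad k
      exact le_of_eq (iSup_congr fun k => (hload k).symm)
    · -- truck serves someone: cost ≥ T
      obtain ⟨j, rest, hjr⟩ := List.exists_cons_of_ne_nil htour
      have hj0 : j ≠ 0 := by
        have : j ∈ sol.tour := by rw [hjr]; exact List.mem_cons_self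
        exact ((sol.tour_mem j).1 this).1
      have hTlen : T ≤ sol.truckLen := by
        rw [PDSSol.truckLen, hjr, tourArcs, if_neg (by simp), cycleArcs]
        have hrot : ((0 : Fin (n+1)) :: j :: rest).rotate 1 = (j :: rest) ++ [0] := by
          rw [List.rotate_cons_succ, List.rotate_zero]
        rw [hrot]
        simp only [List.cons_append, List.zip_cons_cons, List.map_cons, List.sum_cons]
        have h2 := pathSum_ge P htri rest j 0
        have h3 := hlong j hj0
        linarith
      calc sInf S ≤ f (fun _ => k₀) := csInf_le hSbdd (hSrange ▸ ⟨fun _ => k₀, rfl⟩)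
        _ = T := hconst
        _ ≤ sol.truckLen := hTlen
        _ ≤ sol.cost := le_max_left _ _
  -- OPT = sInf S
  have hCSne : {c : ℝ | ∃ sol : PDSSol P, sol.cost = c}.Nonempty :=
    ⟨(allDroneSol P hall (fun _ => k₀)).cost, ⟨_, rfl⟩⟩
  have hCSbdd : BddBelow {c : ℝ | ∃ sol : PDSSol P, sol.cost = c} := by
    refine ⟨0, ?_⟩
    rintro c ⟨sol, rfl⟩
    have h0S : (0:ℝ) ≤ sInf S := by
      apply le_csInf hSne
      intro m hm
      rw [hSrange] at hm
      obtain ⟨a, rfl⟩ := hm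
      exact hf_nonneg a
    exact le_trans h0S (hlb sol)
  have hOPT : OPT P = sInf S := by
    apply le_antisymm
    · apply csInf_le_csInf hCSbdd hSne
      intro m hm
      rw [hSrange] at hm
      obtain ⟨a, rfl⟩ := hm
      exact ⟨allDroneSol P hall a, hcost a⟩
    · apply le_csInf hCSne
      rintro c ⟨sol, rfl⟩
      exact hlb sol
  refine ⟨hOPT, ?_⟩
  -- sInf S is attained
  have hmem : sInf S ∈ S := by
    apply Set.Nonempty.csInf_mem hSne
    rw [hSrange]
    exact Set.finite_range f
  obtain ⟨a, hasol⟩ := hmem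
  refine ⟨allDroneSol P hall a, ?_, ?_⟩
  · intro i hi
    simp [allDroneSol, hi]
  · rw [hcost a, hOPT, hasol, hfdef]
end
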